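/- arXiv:2505.16701 — 8 statements merged into one kernel-verified Lean document; each statement's English description precedes it below -/
import Mathlib

section
/- For the periodic Ising measure on {0,1}^L and 1 ≤ r ≤ L-1, the two-point expectation ⟨η_k η_{k+r}⟩ equals Y_r Y_{L-r} / Z_L, where Y_n = (T^n)_{11} and Z_L = Tr(T^L). -/
open Matrix Finset

noncomputable def msProd : ℕ → (ℕ → Matrix Bool Bool ℝ) → Matrix Bool Bool ℝ
  | 0, _ => 1
  | n+1, B => B 0 * msProd n (fun i => B (i+1))

noncomputable def pp : (n : ℕ) → (ℕ → Matrix Bool Bool ℝ) → Bool → Bool → (Fin n → Bool) → ℝ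
  | 0, B, a, b, _ => B 0 a b
  | n+1, B, a, b, g => B 0 a (g 0) * pp n (fun i => B (i+1)) (g 0) b (Fin.tail g)

lemma msProd_congr (n : ℕ) (B C : ℕ → Matrix Bool Bool ℝ) (h : ∀ i < n, B i = C i) :
    msProd n B = msProd n C := by
  induction n generalizing B C with
  | zero => rfl
  | succ n ih =>
    show B 0 * msProd n (fun i => B (i+1)) = C 0 * msProd n (fun i => C (i+1))
    rw [h 0 (Nat.succ_pos n), ih _ _ (fun i hi => h (i+1) (by omega))]

lemma msProd_const (n : ℕ) (X : Matrix Bool Bool ℝ) : msProd n (fun _ => X) = X ^ n := by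
  induction n with
  | zero => rfl
  | succ n ih => show X * msProd n (fun _ => X) = X ^ (n+1); rw [ih, pow_succ']

lemma msProd_add (p q : ℕ) (B : ℕ → Matrix Bool Bool ℝ) :
    msProd (p + q) B = msProd p B * msProd q (fun i => B (i + p)) := by
  induction p generalizing B with
  | zero => simp [msProd]
  | succ p ih =>
    rw [show p + 1 + q = (p + q) + 1 by omega]
    show B 0 * msProd (p + q) (fun i => B (i+1)) = _
    rw [ih (fun i => B (i+1))]
    show _ = B 0 * msProd p (fun i => B (i+1)) * msProd q (fun i => B (i + (p+1)))
    rw [mul_assoc]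
    simp only [Nat.add_assoc]

lemma prod_cons_snoc (m : ℕ) (B : ℕ → Matrix Bool Bool ℝ) (a b : Bool) (g : Fin m → Bool) :
    ∏ i : Fin (m+1), B i.val ((Fin.cons a (Fin.snoc g b) : Fin (m+2) → Bool) i.castSucc)
      ((Fin.cons a (Fin.snoc g b) : Fin (m+2) → Bool) i.succ) = pp m B a b g := by
  induction m generalizing B a with
  | zero =>
    rw [Fin.prod_univ_one]
    show B (0 : Fin 1).val ((Fin.cons a (Fin.snoc g b) : Fin 2 → Bool) (Fin.castSucc 0))
      ((Fin.cons a (Fin.snoc g b) : Fin 2 → Bool) (Fin.succ 0)) = B 0 a b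
    simp only [Fin.castSucc_zero, Fin.cons_zero, Fin.cons_succ, Fin.val_zero]
    congr 1
  | succ m ih =>
    set q : Fin (m+3) → Bool := Fin.cons a (Fin.snoc g b) with hq
    have hqsucc : ∀ j : Fin (m+2), q j.succ =
        (Fin.cons (g 0) (Fin.snoc (Fin.tail g) b) : Fin (m+2) → Bool) j := by
      intro j
      refine Fin.cases ?_ (fun t => ?_) j
      · show q (Fin.succ 0) = g 0
        rw [hq, Fin.cons_succ]
        rw [show (0 : Fin (m+2)) = Fin.castSucc 0 from rfl, Fin.snoc_castSucc]
      · rw [Fin.cons_succ, hq, Fin.cons_succ]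
        refine Fin.lastCases ?_ (fun s => ?_) t
        · rw [Fin.succ_last, Fin.snoc_last, Fin.snoc_last]
        · rw [Fin.succ_castSucc, Fin.snoc_castSucc, Fin.snoc_castSucc]
          rfl
    rw [Fin.prod_univ_succ]
    have h0 : B (0 : Fin (m+2)).val (q (Fin.castSucc 0)) (q (Fin.succ 0)) = B 0 a (g 0) := by
      rw [Fin.castSucc_zero, hq]
      rw [Fin.cons_zero, Fin.cons_succ, show (0 : Fin (m+2)) = Fin.castSucc 0 from rfl,
          Fin.snoc_castSucc]
      rfl
    rw [h0]
    have h2 : ∀ i : Fin (m+1), B (i.succ).val (q i.succ.castSucc) (q i.succ.succ)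
        = (fun t => B (t+1)) i.val
          ((Fin.cons (g 0) (Fin.snoc (Fin.tail g) b) : Fin (m+2) → Bool) i.castSucc)
          ((Fin.cons (g 0) (Fin.snoc (Fin.tail g) b) : Fin (m+2) → Bool) i.succ) := by
      intro i
      rw [← Fin.succ_castSucc, hqsucc, hqsucc, Fin.val_succ]
    rw [Finset.prod_congr rfl (fun i _ => h2 i)]
    beta_reduce
    rw [ih (fun t => B (t+1)) (g 0) (Fin.tail g)]
    rfl

lemma sum_pp (n : ℕ) (B : ℕ → Matrix Bool Bool ℝ) (a b : Bool) :
    ∑ g : Fin n → Bool, pp n B a b g = msProd (n+1) B a b := by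
  induction n generalizing B a with
  | zero => simp [pp, msProd, Matrix.mul_apply, Matrix.one_apply]
  | succ n ih =>
    rw [← Equiv.sum_comp (Fin.consEquiv fun _ => Bool)]
    rw [Fintype.sum_prod_type]
    have : ∀ (c : Bool) (g' : Fin n → Bool),
        pp (n+1) B a b (Fin.consEquiv (fun _ => Bool) (c, g')) =
          B 0 a c * pp n (fun i => B (i+1)) c b g' := by
      intro c g'
      simp [pp, Fin.consEquiv, Fin.cons_zero, Fin.tail_cons]
    simp only [this]
    have hih := fun c : Bool => ih (fun i => B (i+1)) c
    simp only [← Finset.mul_sum, hih]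
    rw [show msProd (n+1+1) B = B 0 * msProd (n+1) (fun i => B (i+1)) from rfl]
    rw [Matrix.mul_apply]

lemma cycle_eq (m : ℕ) (B : ℕ → Matrix Bool Bool ℝ) :
    ∑ f : Fin (m+1) → Bool, ∏ i : Fin (m+1), B i.val (f i) (f (i+1)) =
      (msProd (m+1) B).trace := by
  have key : ∀ (a : Bool) (g : Fin m → Bool),
      ∏ i : Fin (m+1), B i.val ((Fin.cons a g : Fin (m+1) → Bool) i)
        ((Fin.cons a g : Fin (m+1) → Bool) (i+1)) = pp m B a a g := by
    intro a g
    rw [← prod_cons_snoc m B a a g]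
    refine Finset.prod_congr rfl (fun i _ => ?_)
    have c1 : (Fin.cons a (Fin.snoc g a) : Fin (m+2) → Bool) i.castSucc
        = (Fin.cons a g : Fin (m+1) → Bool) i := by
      refine Fin.cases ?_ (fun t => ?_) i
      · rw [Fin.castSucc_zero, Fin.cons_zero, Fin.cons_zero]
      · rw [← Fin.succ_castSucc, Fin.cons_succ, Fin.snoc_castSucc, Fin.cons_succ]
    have c2 : (Fin.cons a (Fin.snoc g a) : Fin (m+2) → Bool) i.succ
        = (Fin.cons a g : Fin (m+1) → Bool) (i+1) := by
      rw [Fin.cons_succ]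
      refine Fin.lastCases ?_ (fun s => ?_) i
      · rw [Fin.snoc_last, Fin.last_add_one, Fin.cons_zero]
      · rw [Fin.snoc_castSucc, Fin.coeSucc_eq_succ, Fin.cons_succ]
    rw [c1, c2]
  rw [← Equiv.sum_comp (Fin.consEquiv fun _ => Bool)
    (fun f => ∏ i : Fin (m+1), B i.val (f i) (f (i+1))), Fintype.sum_prod_type]
  have : ∀ (a : Bool) (g : Fin m → Bool),
      (fun f => ∏ i : Fin (m+1), B i.val (f i) (f (i+1)))
        ((Fin.consEquiv fun _ => Bool) (a, g)) = pp m B a a g := by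
    intro a g
    rw [← key a g]
    rfl
  simp [this, key, sum_pp, Matrix.trace, Matrix.diag]

lemma trace_DD (X Y : Matrix Bool Bool ℝ) :
    (Matrix.diagonal (fun b : Bool => if b then (1:ℝ) else 0) * X *
     (Matrix.diagonal (fun b : Bool => if b then (1:ℝ) else 0) * Y)).trace
      = X true true * Y true true := by
  simp [Matrix.trace, Matrix.diag, Matrix.mul_apply, Fintype.sum_bool, Matrix.diagonal]

lemma pow_entry (M : Matrix Bool Bool ℝ) (n : ℕ) :
    ((M.submatrix finTwoEquiv finTwoEquiv) ^ n) 1 1 = (M ^ n) true true := by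
  have h : M.submatrix finTwoEquiv finTwoEquiv
      = Matrix.reindexAlgEquiv ℝ ℝ finTwoEquiv.symm M := by
    ext i j
    simp [Matrix.reindexAlgEquiv, Matrix.reindex]
  rw [h, ← map_pow]
  simp [Matrix.reindexAlgEquiv, Matrix.reindex, finTwoEquiv]

/-- Two-point function of the periodic Ising measure:
⟨η_k η_{k+r}⟩ = Y_r Y_{L-r} / Z_L for 1 ≤ r ≤ L-1. -/
theorem stmt_5 (L : ℕ) [NeZero L] (x y : ℝ) (hx : 0 < x) (hy : 0 < y) :
    let T : Matrix (Fin 2) (Fin 2) ℝ := !![1, x; x, x^2*y]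
    let Tw : Bool → Bool → ℝ := fun a b =>
      (if a then x else 1) * (if b then x else 1) * (if a && b then y else 1)
    let ev : Bool → ℝ := fun b => if b then 1 else 0
    let W : (ZMod L → Bool) → ℝ := fun η => ∏ j : ZMod L, Tw (η j) (η (j + 1))
    let Z : ℝ := ∑ η : ZMod L → Bool, W η
    ∀ k : ZMod L, ∀ r : ℕ, 1 ≤ r → r ≤ L - 1 →
      (∑ η : ZMod L → Bool, W η * (ev (η k) * ev (η (k + (r : ZMod L))))) / Z
        = (T ^ r) 1 1 * (T ^ (L - r)) 1 1 / Z := by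
  intro T Tw ev W Z k r hr1 hr2
  obtain ⟨m, rfl⟩ : ∃ m, L = m + 1 :=
    ⟨L - 1, (Nat.succ_pred_eq_of_pos (Nat.pos_of_ne_zero (NeZero.ne L))).symm⟩
  congr 1
  -- notation
  set M : Matrix Bool Bool ℝ := Matrix.of Tw with hMdef
  set D : Matrix Bool Bool ℝ := Matrix.diagonal ev with hDdef
  have hrL : r < m + 1 := by omega
  have hrz : (r : ZMod (m+1)) ≠ 0 := by
    intro h
    have h1 := (ZMod.natCast_eq_zero_iff r (m+1)).mp h
    have h2 := Nat.le_of_dvd (by omega) h1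
    omega
  have hkk : k + (r : ZMod (m+1)) ≠ k := by
    simpa using hrz
  -- the matrix attached to a site
  set A : ZMod (m+1) → Matrix Bool Bool ℝ :=
    fun j => if j = k ∨ j = k + (r : ZMod (m+1)) then D * M else M with hAdef
  set C : ℕ → Matrix Bool Bool ℝ :=
    fun t => if t = 0 ∨ t = r then D * M else M with hCdef
  -- Step A : rewrite each summand as a cyclic product
  have hA : ∀ η : ZMod (m+1) → Bool,
      W η * (ev (η k) * ev (η (k + (r : ZMod (m+1)))))
        = ∏ j : ZMod (m+1), A j (η j) (η (j+1)) := by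
    intro η
    have hmem : k + (r : ZMod (m+1)) ∈ (univ : Finset (ZMod (m+1))).erase k :=
      Finset.mem_erase.mpr ⟨hkk, Finset.mem_univ _⟩
    have hsplit : ∀ F : ZMod (m+1) → ℝ,
        ∏ j : ZMod (m+1), F j = F k * (F (k + (r : ZMod (m+1))) *
          ∏ j ∈ ((univ : Finset (ZMod (m+1))).erase k).erase (k + (r : ZMod (m+1))), F j) := by
      intro F
      rw [Finset.mul_prod_erase _ _ hmem, Finset.mul_prod_erase _ _ (Finset.mem_univ k)]
    have hW : W η = ∏ j : ZMod (m+1), M (η j) (η (j+1)) := rfl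
    rw [hW, hsplit (fun j => M (η j) (η (j+1))), hsplit (fun j => A j (η j) (η (j+1)))]
    have hAk : A k = D * M := by rw [hAdef]; simp
    have hAkr : A (k + (r : ZMod (m+1))) = D * M := by rw [hAdef]; simp
    have hrest : ∀ j ∈ ((univ : Finset (ZMod (m+1))).erase k).erase (k + (r : ZMod (m+1))),
        A j (η j) (η (j+1)) = M (η j) (η (j+1)) := by
      intro j hj
      have h1 := Finset.ne_of_mem_erase hj
      have h2 := Finset.ne_of_mem_erase (Finset.mem_of_mem_erase hj)
      rw [hAdef]
      simp [h1, h2]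
    rw [Finset.prod_congr rfl hrest, hAk, hAkr, Matrix.mul_apply, Matrix.mul_apply]
    have hDM : ∀ a b : Bool, (D * M) a b = ev a * M a b := by
      intro a b; rw [hDdef, Matrix.diagonal_mul]
    rw [← Matrix.mul_apply, ← Matrix.mul_apply, hDM, hDM]
    ring
  simp only [hA]
  -- Step C : recentre the cycle at k
  have hC : ∀ η : ZMod (m+1) → Bool,
      ∏ j : ZMod (m+1), A j (η j) (η (j+1))
        = ∏ i : ZMod (m+1), A (k+i) (η (k+i)) (η (k+(i+1))) := by
    intro η
    rw [← Equiv.prod_comp (Equiv.addLeft k) (fun j => A j (η j) (η (j+1)))]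
    exact Finset.prod_congr rfl (fun i _ => by rw [show (Equiv.addLeft k) i = k + i from rfl, add_assoc])
  simp only [hC]
  -- Step D : change summation variable
  have hD : ∑ η : ZMod (m+1) → Bool, ∏ i : ZMod (m+1), A (k+i) (η (k+i)) (η (k+(i+1)))
      = ∑ f : ZMod (m+1) → Bool, ∏ i : ZMod (m+1), A (k+i) (f i) (f (i+1)) := by
    refine Fintype.sum_equiv (Equiv.arrowCongr (Equiv.addLeft k).symm (Equiv.refl Bool)) _ _ ?_
    intro η
    exact Finset.prod_congr rfl (fun i _ => rfl)
  rw [hD]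
  -- Step E : identify with the Fin-indexed cycle and apply cycle_eq
  have hAC : ∀ i : ZMod (m+1), A (k + i) = C i.val := by
    intro i
    have hval : i = (r : ZMod (m+1)) ↔ i.val = r := by
      constructor
      · intro h; rw [h, ZMod.val_cast_of_lt hrL]
      · intro h
        have h2 : i.val = ((r : ZMod (m+1))).val := by rw [ZMod.val_cast_of_lt hrL]; exact h
        exact ZMod.val_injective _ h2
    have hz : i = 0 ↔ i.val = 0 := (ZMod.val_eq_zero i).symm
    rw [hAdef, hCdef]
    simp only [add_right_inj, ← hval, ← hz, add_eq_left]
  have hE : ∑ f : ZMod (m+1) → Bool, ∏ i : ZMod (m+1), A (k+i) (f i) (f (i+1))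
      = ∑ f : Fin (m+1) → Bool, ∏ i : Fin (m+1), C i.val (f i) (f (i+1)) := by
    refine Fintype.sum_equiv (Equiv.refl _) _ _ ?_
    intro f
    refine Fintype.prod_equiv (Equiv.refl _) _ _ ?_
    intro i
    rw [hAC i]
    rfl
  rw [hE, cycle_eq]
  -- Step F : compute the matrix product
  have hMr : msProd r C = D * M ^ r := by
    obtain ⟨p, rfl⟩ : ∃ p, r = p + 1 := ⟨r - 1, by omega⟩
    show C 0 * msProd p (fun i => C (i+1)) = _
    rw [show C 0 = D * M by rw [hCdef]; simp,
      msProd_congr p _ (fun _ => M)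
        (fun i hi => by show C (i+1) = M; rw [hCdef]; exact if_neg (by omega)),
      msProd_const, pow_succ', mul_assoc]
  have hMlr : msProd (m+1-r) (fun i => C (i + r)) = D * M ^ (m+1-r) := by
    obtain ⟨q, hq⟩ : ∃ q, m+1-r = q+1 := ⟨m-r, by omega⟩
    rw [hq]
    rw [show msProd (q+1) (fun i => C (i + r)) = C (0 + r) * msProd q (fun i => C (i+1+r)) from rfl]
    rw [show C (0 + r) = D * M by rw [hCdef]; simp,
      msProd_congr q _ (fun _ => M)
        (fun i hi => by show C (i+1+r) = M; rw [hCdef]; exact if_neg (by omega)),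
      msProd_const, pow_succ', mul_assoc]
  rw [show m + 1 = r + (m+1-r) by omega, msProd_add, hMr, hMlr]
  rw [show r + (m+1-r) - r = m+1-r by omega]
  have hev : ev = fun b : Bool => if b then (1:ℝ) else 0 := rfl
  rw [hDdef, hev, trace_DD]
  have hTw : Tw = fun a b : Bool =>
      (if a then x else 1) * (if b then x else 1) * (if a && b then y else 1) := rfl
  have hT : T = M.submatrix finTwoEquiv finTwoEquiv := by
    have h11 : (M.submatrix finTwoEquiv finTwoEquiv) 1 1 = x*x*y := by
      rw [hMdef]; simp [finTwoEquiv, hTw]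
    ext i j
    fin_cases i <;> fin_cases j
    · show (1:ℝ) = _; rw [hMdef]; simp [finTwoEquiv, hTw]
    · show x = _; rw [hMdef]; simp [finTwoEquiv, hTw]
    · show x = _; rw [hMdef]; simp [finTwoEquiv, hTw]
    · exact (by ring : x^2*y = x*x*y).trans h11.symm
  rw [hT, pow_entry, pow_entry]
end

section
/- In the thermodynamic limit L→∞, the density of the periodic Ising measure converges: ρ = lim_{L→∞} Y_L/(λ₀^L + λ₁^L) = (v⁽⁰⁾₁)², the square of the second component of the normalized Perron eigenvector of the transfer matrix. -/
open Matrix Filter Topology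

/-- Thermodynamic limit of the density of the periodic Ising measure:
ρ = lim_{L→∞} Y_L/(λ₀^L + λ₁^L) = (v⁽⁰⁾₁)². -/
theorem stmt_8 (x y : ℝ) (hx : 0 < x) (hy : 0 < y) :
    let T : Matrix (Fin 2) (Fin 2) ℝ := !![1, x; x, x^2*y]
    let l0 : ℝ := (1 + x^2*y + Real.sqrt ((1 - x^2*y)^2 + 4*x^2)) / 2
    let l1 : ℝ := (1 + x^2*y - Real.sqrt ((1 - x^2*y)^2 + 4*x^2)) / 2
    let Y : ℕ → ℝ := fun n => (T ^ n) 1 1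
    let v01 : ℝ := x / Real.sqrt ((l0 - x^2*y)^2 + x^2)
    Tendsto (fun L : ℕ => Y L / (l0 ^ L + l1 ^ L)) atTop (𝓝 (v01 ^ 2)) := by
  intro T l0 l1 Y v01
  set D : ℝ := Real.sqrt ((1 - x^2*y)^2 + 4*x^2) with hDdef
  have hDarg : (0:ℝ) < (1 - x^2*y)^2 + 4*x^2 := by positivity
  have hD2 : D^2 = (1 - x^2*y)^2 + 4*x^2 := Real.sq_sqrt hDarg.le
  have hDpos : 0 < D := Real.sqrt_pos.mpr hDarg
  have hl0 : l0 = (1 + x^2*y + D)/2 := rfl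
  have hl1 : l1 = (1 + x^2*y - D)/2 := rfl
  have hsum : l0 + l1 = 1 + x^2*y := by rw [hl0, hl1]; ring
  have hdiff : l0 - l1 = D := by rw [hl0, hl1]; ring
  have hl0pos : 0 < l0 := by rw [hl0]; positivity
  have hkey : (l0 - 1) * (l0 - x^2*y) = x^2 := by
    rw [hl0]; linear_combination hD2 / 4
  have hprod : l0 * l1 = x^2*y - x^2 := by
    have h1 : l1 = 1 + x^2*y - l0 := by linarith
    rw [h1]; linear_combination -hkey
  have habs : |l1| < l0 := by
    rw [abs_lt]
    constructor
    · nlinarith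
    · nlinarith
  -- closed form for the matrix entries
  have key : ∀ n : ℕ, (T ^ n) 0 1 = x * (l0^n - l1^n) / D ∧
      (T ^ n) 1 1 = ((x^2*y - l1) * l0^n + (l0 - x^2*y) * l1^n) / D := by
    intro n
    induction n with
    | zero =>
      simp [Matrix.one_apply]
      rw [eq_comm, div_eq_one_iff_eq hDpos.ne']
      linarith
    | succ n ih =>
      obtain ⟨ih1, ih2⟩ := ih
      rw [pow_succ']
      constructor
      · have h01 : (T * T ^ n) 0 1 = 1 * (T ^ n) 0 1 + x * (T ^ n) 1 1 := by
          simp [T, Matrix.mul_apply, Fin.sum_univ_two]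
        have hnum : 1 * (x * (l0^n - l1^n)) + x * ((x^2*y - l1) * l0^n + (l0 - x^2*y) * l1^n)
            = x * (l0^(n+1) - l1^(n+1)) := by
          linear_combination (x * (l0^n - l1^n)) * hsum
        rw [h01, ih1, ih2]
        calc 1 * (x * (l0^n - l1^n) / D)
              + x * (((x^2*y - l1) * l0^n + (l0 - x^2*y) * l1^n) / D)
            = (1 * (x * (l0^n - l1^n))
              + x * ((x^2*y - l1) * l0^n + (l0 - x^2*y) * l1^n)) / D := by ring
          _ = x * (l0^(n+1) - l1^(n+1)) / D := by rw [hnum]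
      · have h11 : (T * T ^ n) 1 1 = x * (T ^ n) 0 1 + x^2*y * (T ^ n) 1 1 := by
          simp [T, Matrix.mul_apply, Fin.sum_univ_two]
        have hnum : x * (x * (l0^n - l1^n)) + x^2*y * ((x^2*y - l1) * l0^n + (l0 - x^2*y) * l1^n)
            = (x^2*y - l1) * l0^(n+1) + (l0 - x^2*y) * l1^(n+1) := by
          linear_combination x^2*y*(l1^n - l0^n) * hsum + (l0^n - l1^n) * hprod
        rw [h11, ih1, ih2]
        calc x * (x * (l0^n - l1^n) / D)
              + x^2*y * (((x^2*y - l1) * l0^n + (l0 - x^2*y) * l1^n) / D)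
            = (x * (x * (l0^n - l1^n))
              + x^2*y * ((x^2*y - l1) * l0^n + (l0 - x^2*y) * l1^n)) / D := by ring
          _ = ((x^2*y - l1) * l0^(n+1) + (l0 - x^2*y) * l1^(n+1)) / D := by rw [hnum]
  set r : ℝ := l1 / l0 with hrdef
  have hr : |r| < 1 := by
    rw [hrdef, abs_div, abs_of_pos hl0pos, div_lt_one hl0pos]
    exact habs
  have hden : ∀ L : ℕ, 0 < 1 + r ^ L := by
    intro L
    cases L with
    | zero => norm_num
    | succ n =>
      have h1 : |r ^ (n+1)| < 1 := by
        rw [abs_pow]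
        exact pow_lt_one₀ (abs_nonneg r) hr (Nat.succ_ne_zero n)
      have := abs_lt.mp h1
      linarith [this.1]
  have heqfun : ∀ L : ℕ, Y L / (l0 ^ L + l1 ^ L) =
      ((x^2*y - l1) + (l0 - x^2*y) * r ^ L) / (D * (1 + r ^ L)) := by
    intro L
    have hYL : Y L = ((x^2*y - l1) * l0^L + (l0 - x^2*y) * l1^L) / D := (key L).2
    have hrL : r ^ L = l1 ^ L / l0 ^ L := div_pow l1 l0 L
    have hl0L : (0:ℝ) < l0 ^ L := pow_pos hl0pos L
    have hsumL : l0 ^ L + l1 ^ L = l0 ^ L * (1 + r ^ L) := by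
      rw [hrL]; field_simp
    have hne1 : D * (l0 ^ L * (1 + r ^ L)) ≠ 0 :=
      (mul_pos hDpos (mul_pos hl0L (hden L))).ne'
    have hne2 : D * (1 + r ^ L) ≠ 0 := (mul_pos hDpos (hden L)).ne'
    rw [hYL, hsumL, div_div, div_eq_div_iff hne1 hne2, hrL]
    field_simp
  have hr0 : Tendsto (fun L : ℕ => r ^ L) atTop (𝓝 0) :=
    tendsto_pow_atTop_nhds_zero_of_abs_lt_one hr
  have hlim : Tendsto (fun L : ℕ => ((x^2*y - l1) + (l0 - x^2*y) * r ^ L) / (D * (1 + r ^ L)))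
      atTop (𝓝 (((x^2*y - l1) + (l0 - x^2*y) * 0) / (D * (1 + 0)))) := by
    apply Tendsto.div
    · exact tendsto_const_nhds.add (tendsto_const_nhds.mul hr0)
    · exact tendsto_const_nhds.mul (tendsto_const_nhds.add hr0)
    · simp [hDpos.ne']
  have hval : ((x^2*y - l1) + (l0 - x^2*y) * 0) / (D * (1 + 0)) = v01 ^ 2 := by
    have hSpos : (0:ℝ) < (l0 - x^2*y)^2 + x^2 := by positivity
    have hv : v01 ^ 2 = x^2 / ((l0 - x^2*y)^2 + x^2) := by
      show (x / Real.sqrt ((l0 - x^2*y)^2 + x^2))^2 = _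
      rw [div_pow, Real.sq_sqrt hSpos.le]
    have hsimp : ((x^2*y - l1) + (l0 - x^2*y) * 0) / (D * (1 + 0))
        = (x^2*y - l1) / D := by ring
    rw [hsimp, hv, div_eq_div_iff hDpos.ne' hSpos.ne']
    have hA : x^2*y - l1 = l0 - 1 := by linarith
    have hl1' : l1 = 1 + x^2*y - l0 := by linarith
    rw [hA, ← hdiff, hl1']
    linear_combination (l0 - x^2*y) * hkey
  rw [← hval]
  exact hlim.congr (fun L => (heqfun L).symm)
end

section
/- In the thermodynamic limit, the nearest-neighbor Ising correlations satisfy lim_{L→∞}⟨η_k(1-η_{k+1})⟩ = (1 - x²y/λ₀)·ρ and lim_{L→∞}⟨η_k(1-η_{k+1})η_{k+2}⟩ = (x²/λ₀²)·ρ, where ρ = (v⁽⁰⁾₁)². -/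
open Matrix Filter Topology

/-- Thermodynamic limit of nearest-neighbour Ising correlations:
lim ⟨η_k(1-η_{k+1})⟩ = (1 - x²y/λ₀)·ρ and
lim ⟨η_k(1-η_{k+1})η_{k+2}⟩ = (x²/λ₀²)·ρ, with ρ = (v⁽⁰⁾₁)²,
where the finite-L expectations are given by the transfer-matrix formulas
⟨η_k(1-η_{k+1})⟩_L = (Y_L - Y₁Y_{L-1})/Z_L and
⟨η_k(1-η_{k+1})η_{k+2}⟩_L = (Y₂ - Y₁²)Y_{L-2}/Z_L, Z_L = λ₀^L + λ₁^L. -/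
theorem stmt_9 (x y : ℝ) (hx : 0 < x) (hy : 0 < y) :
    let T : Matrix (Fin 2) (Fin 2) ℝ := !![1, x; x, x^2*y]
    let l0 : ℝ := (1 + x^2*y + Real.sqrt ((1 - x^2*y)^2 + 4*x^2)) / 2
    let l1 : ℝ := (1 + x^2*y - Real.sqrt ((1 - x^2*y)^2 + 4*x^2)) / 2
    let Y : ℕ → ℝ := fun n => (T ^ n) 1 1
    let Z : ℕ → ℝ := fun L => l0 ^ L + l1 ^ L
    let ρ : ℝ := (x / Real.sqrt ((l0 - x^2*y)^2 + x^2)) ^ 2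
    Tendsto (fun L : ℕ => (Y L - Y 1 * Y (L - 1)) / Z L) atTop
        (𝓝 ((1 - x^2*y/l0) * ρ)) ∧
    Tendsto (fun L : ℕ => (Y 2 - (Y 1)^2) * Y (L - 2) / Z L) atTop
        (𝓝 ((x^2/l0^2) * ρ)) := by
  intro T l0 l1 Y Z ρ
  have hTe : T = !![1, x; x, x^2*y] := rfl
  have hl0 : l0 = (1 + x^2*y + Real.sqrt ((1 - x^2*y)^2 + 4*x^2))/2 := rfl
  have hl1 : l1 = (1 + x^2*y - Real.sqrt ((1 - x^2*y)^2 + 4*x^2))/2 := rfl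
  have hYd : ∀ n, Y n = (T^n) 1 1 := fun _ => rfl
  have hZd : ∀ L, Z L = l0^L + l1^L := fun _ => rfl
  have hρd : ρ = (x / Real.sqrt ((l0 - x^2*y)^2 + x^2))^2 := rfl
  clear_value T l0 l1 Y Z ρ
  set s : ℝ := x^2*y with hs
  have hs0 : 0 < s := by positivity
  set D : ℝ := Real.sqrt ((1 - s)^2 + 4*x^2) with hD
  have hD2 : D^2 = (1-s)^2 + 4*x^2 := Real.sq_sqrt (by positivity)
  have hDpos : 0 < D := Real.sqrt_pos.2 (by positivity)
  have hDne : D ≠ 0 := ne_of_gt hDpos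
  have hDgt : |1 - s| < D := by
    rw [← Real.sqrt_sq_eq_abs]
    exact Real.sqrt_lt_sqrt (by positivity) (by nlinarith)
  have habs := abs_lt.1 hDgt
  have hl0s : s < l0 := by rw [hl0]; linarith
  have h1l0 : 1 < l0 := by rw [hl0]; linarith
  have hl0pos : 0 < l0 := by linarith
  have hl0ne : l0 ≠ 0 := ne_of_gt hl0pos
  have hl1abs : |l1| < l0 := by
    rw [abs_lt, hl0, hl1]; constructor <;> linarith
  have hdiff : l0 - l1 = D := by rw [hl0, hl1]; ring
  have char0 : l0^2 = (1+s)*l0 - (s - x^2) := by rw [hl0]; linear_combination hD2/4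
  have char1 : l1^2 = (1+s)*l1 - (s - x^2) := by rw [hl1]; linear_combination hD2/4
  have Cx0 : x^2 = (l0-1)*(l0-s) := by linear_combination -char0
  have Cx1 : x^2 = (1-l1)*(s-l1) := by linear_combination -char1
  -- closed form for matrix entries
  have hYc : ∀ n : ℕ, (T^n) 1 0 = x*(l0^n - l1^n)/D ∧
      (T^n) 1 1 = ((l0-1)*l0^n + (1-l1)*l1^n)/D := by
    intro n
    induction n with
    | zero =>
      rw [pow_zero, Matrix.one_apply_ne (by decide : (1 : Fin 2) ≠ 0),
        Matrix.one_apply_eq, pow_zero, pow_zero]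
      constructor
      · ring
      · field_simp; linarith [hdiff]
    | succ n ih =>
      obtain ⟨ihu, ihv⟩ := ih
      have hT00 : T 0 0 = 1 := by rw [hTe]; simp
      have hT01 : T 0 1 = x := by rw [hTe]; simp
      have hT10 : T 1 0 = x := by rw [hTe]; simp
      have hT11 : T 1 1 = s := by rw [hTe]; simp [hs]
      rw [pow_succ]
      constructor
      · rw [Matrix.mul_apply, Fin.sum_univ_two, ihu, ihv, hT00, hT10]
        field_simp; ring
      · rw [Matrix.mul_apply, Fin.sum_univ_two, ihu, ihv, hT01, hT11]
        rw [div_mul_eq_mul_div, div_mul_eq_mul_div, ← add_div]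
        congr 1
        linear_combination l0^n * Cx0 - l1^n * Cx1
  have hYf : ∀ n : ℕ, Y n = ((l0-1)*l0^n + (1-l1)*l1^n)/D := fun n => by
    rw [hYd]; exact (hYc n).2
  have hsum : l0 + l1 = 1 + s := by rw [hl0, hl1]; ring
  have hY1 : Y 1 = s := by
    rw [hYf, pow_one, pow_one, div_eq_iff hDne]
    linear_combination (l0+l1-1)*hdiff + D*hsum
  have hY2 : Y 2 = x^2 + s^2 := by
    rw [hYd, pow_two, Matrix.mul_apply, Fin.sum_univ_two, hTe]
    simp [hs]; ring
  -- rho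
  have hl0sne : l0 - s ≠ 0 := ne_of_gt (by linarith)
  have hsq : (l0 - s)^2 + x^2 = (l0 - s) * D := by
    have h2 : 2*l0 - (1+s) = D := by rw [hl0]; ring
    linear_combination Cx0 + (l0 - s) * h2
  have hrho : ρ = (l0-1)/D := by
    rw [hρd, div_pow, Real.sq_sqrt (by positivity), hsq, Cx0,
      mul_comm (l0-1) (l0-s), mul_div_mul_left _ _ hl0sne]
  -- generic limit lemma
  have hr : |l1/l0| < 1 := by
    rw [abs_div, abs_of_pos hl0pos, div_lt_one hl0pos]; exact hl1abs
  have hrt : Tendsto (fun n : ℕ => (l1/l0) ^ n) atTop (𝓝 0) :=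
    tendsto_pow_atTop_nhds_zero_of_abs_lt_one hr
  have key : ∀ (A B C E : ℝ), C ≠ 0 →
      Tendsto (fun n : ℕ => (A + B*(l1/l0)^n)/(C + E*(l1/l0)^n)) atTop (𝓝 (A/C)) := by
    intro A B C E hC
    have h1 : Tendsto (fun n : ℕ => A + B*(l1/l0)^n) atTop (𝓝 (A + B*0)) :=
      tendsto_const_nhds.add (hrt.const_mul B)
    have h2 : Tendsto (fun n : ℕ => C + E*(l1/l0)^n) atTop (𝓝 (C + E*0)) :=
      tendsto_const_nhds.add (hrt.const_mul E)
    have h3 := h1.div h2 (by simpa using hC)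
    simp only [mul_zero, add_zero] at h3
    exact h3
  constructor
  · -- first limit
    rw [← Filter.tendsto_add_atTop_iff_nat 2]
    have keyc := (key ((l0-1)*(l0-s)/D) ((1-l1)*(l1-s)/D) l0 l1 hl0ne).comp
      (tendsto_add_atTop_nat 1)
    have heq : ∀ n : ℕ, ((l0-1)*(l0-s)/D + (1-l1)*(l1-s)/D * (l1/l0)^(n+1)) /
        (l0 + l1 * (l1/l0)^(n+1)) = (Y (n+2) - Y 1 * Y (n+2-1)) / Z (n+2) := by
      intro n
      have hsub : n + 2 - 1 = n + 1 := rfl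
      rw [hsub, hY1, hYf (n+2), hYf (n+1)]
      have hden : Z (n+2) = l0^(n+1) * (l0 + l1 * (l1/l0)^(n+1)) := by
        rw [hZd, div_pow]; field_simp; ring
      have hnum : ((l0-1)*l0^(n+2) + (1-l1)*l1^(n+2))/D
          - s * (((l0-1)*l0^(n+1) + (1-l1)*l1^(n+1))/D)
          = l0^(n+1) * ((l0-1)*(l0-s)/D + (1-l1)*(l1-s)/D * (l1/l0)^(n+1)) := by
        rw [div_pow]; field_simp; ring
      rw [hden, hnum, mul_div_mul_left _ _ (pow_ne_zero _ hl0ne)]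
    have hlim := keyc.congr heq
    have hval : ((l0-1)*(l0-s)/D)/l0 = (1 - s/l0) * ρ := by
      rw [hrho]; field_simp
    rw [← hval]
    exact hlim
  · -- second limit
    rw [← Filter.tendsto_add_atTop_iff_nat 2]
    have keyc := key (x^2*(l0-1)/D) (x^2*(1-l1)/D) (l0^2) (l1^2)
      (pow_ne_zero _ hl0ne)
    have heq : ∀ n : ℕ, (x^2*(l0-1)/D + x^2*(1-l1)/D * (l1/l0)^n) /
        (l0^2 + l1^2 * (l1/l0)^n) = (Y 2 - (Y 1)^2) * Y (n+2-2) / Z (n+2) := by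
      intro n
      have hsub : n + 2 - 2 = n := by omega
      rw [hsub, hY1, hY2, hYf n]
      have hden : Z (n+2) = l0^n * (l0^2 + l1^2 * (l1/l0)^n) := by
        rw [hZd, div_pow]; field_simp; ring
      have hnum : (x^2 + s^2 - s^2) * (((l0-1)*l0^n + (1-l1)*l1^n)/D)
          = l0^n * (x^2*(l0-1)/D + x^2*(1-l1)/D * (l1/l0)^n) := by
        rw [div_pow]; field_simp; ring
      rw [hden, hnum, mul_div_mul_left _ _ (pow_ne_zero _ hl0ne)]
    have hlim := keyc.congr heq
    have hval : (x^2*(l0-1)/D)/(l0^2) = (x^2/l0^2) * ρ := by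
      rw [hrho]; ring
    rw [← hval]
    exact hlim
end

section
/- For the generalized KLS model with no static interaction (ε=0), the limiting stationary current is j(ρ) = ρ(1-ρ)[r - ℓ + (rκ - ℓλ)(1-2ρ)], and if -(rκ - ℓλ) < r - ℓ < rκ - ℓλ with rκ - ℓλ ≠ 0, then j changes sign at ρ₀ = (1/2)(r(1+κ) - ℓ(1+λ))/(rκ - ℓλ), which satisfies 0 < ρ₀ < 1. -/
/-- Current reversal for the generalized KLS model with no static interaction
(ε = 0): j(ρ) = ρ(1-ρ)[r-ℓ + (rκ-ℓλ)(1-2ρ)] vanishes at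
ρ₀ = (1/2)(r(1+κ)-ℓ(1+λ))/(rκ-ℓλ), with 0 < ρ₀ < 1 and a genuine sign change,
provided -(rκ-ℓλ) < r-ℓ < rκ-ℓλ and rκ-ℓλ ≠ 0. -/
theorem stmt_10 (r ℓ κ lam : ℝ) (hr : 0 ≤ r) (hl : 0 ≤ ℓ)
    (hκ : 0 < κ ∧ κ < 1) (hlam : 0 < lam ∧ lam < 1)
    (h1 : -(r*κ - ℓ*lam) < r - ℓ) (h2 : r - ℓ < r*κ - ℓ*lam)
    (h3 : r*κ - ℓ*lam ≠ 0) :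
    let j : ℝ → ℝ := fun ρ => ρ * (1 - ρ) * ((r - ℓ) + (r*κ - ℓ*lam) * (1 - 2*ρ))
    let ρ0 : ℝ := (1/2) * (r*(1+κ) - ℓ*(1+lam)) / (r*κ - ℓ*lam)
    j ρ0 = 0 ∧ 0 < ρ0 ∧ ρ0 < 1 ∧
    (∀ ρ : ℝ, 0 < ρ → ρ < ρ0 → 0 < j ρ) ∧
    (∀ ρ : ℝ, ρ0 < ρ → ρ < 1 → j ρ < 0) := by
  intro j ρ0
  set b : ℝ := r*κ - ℓ*lam with hb_def
  have hb : 0 < b := by linarith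
  have hρ0 : ρ0 = (1/2) * (r*(1+κ) - ℓ*(1+lam)) / b := rfl
  have hfac : ∀ ρ : ℝ, (r - ℓ) + b * (1 - 2*ρ) = 2 * b * (ρ0 - ρ) := by
    intro ρ
    rw [hρ0]
    field_simp
    ring
  have hj : ∀ ρ : ℝ, j ρ = ρ * (1 - ρ) * (2 * b * (ρ0 - ρ)) := by
    intro ρ; simp only [j]; rw [hfac]
  have hρ0pos : 0 < ρ0 := by
    rw [hρ0]
    apply div_pos _ hb
    nlinarith
  have hρ0lt : ρ0 < 1 := by
    rw [hρ0, div_lt_one hb]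
    nlinarith
  refine ⟨?_, hρ0pos, hρ0lt, ?_, ?_⟩
  · rw [hj]; ring
  · intro ρ h0 hρ
    rw [hj]
    have h1ρ : 0 < 1 - ρ := by linarith
    have hd : 0 < ρ0 - ρ := by linarith
    positivity
  · intro ρ hρ h1'
    rw [hj]
    have hA : 0 < ρ * (1 - ρ) := by nlinarith
    have hB : 2 * b * (ρ0 - ρ) < 0 := by nlinarith
    exact mul_neg_of_pos_of_neg hA hB
end

section
/- The generalized periodic KLS model is reversible with respect to the periodic Ising measure if and only if r = ℓ and κ = λ. -/
open Finset

def evB : Bool → ℝ := fun b => if b then 1 else 0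

def swapK {L : ℕ} (k : ZMod L) (η : ZMod L → Bool) : ZMod L → Bool :=
  fun j => if j = k then η (k+1) else if j = k+1 then η k else η j

def FK {L : ℕ} (x y : ℝ) (η : ZMod L → Bool) (j : ZMod L) : ℝ :=
  (if η j then x else 1) * (if η (j+1) then x else 1) * (if η j && η (j+1) then y else 1)

lemma zmod_cast_ne {L : ℕ} (hL : 4 ≤ L) (c : ℕ) (h0 : 0 < c) (h4 : c < 4) :
    (c : ZMod L) ≠ 0 := by
  intro h
  rw [ZMod.natCast_eq_zero_iff] at h
  have := Nat.le_of_dvd h0 h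
  omega

lemma zone {L : ℕ} (hL : 4 ≤ L) : (1 : ZMod L) ≠ 0 := by
  have := zmod_cast_ne (L := L) hL 1 (by norm_num) (by norm_num); simpa using this

lemma ztwo {L : ℕ} (hL : 4 ≤ L) : (2 : ZMod L) ≠ 0 := by
  have := zmod_cast_ne (L := L) hL 2 (by norm_num) (by norm_num); simpa using this

lemma zthree {L : ℕ} (hL : 4 ≤ L) : (3 : ZMod L) ≠ 0 := by
  have := zmod_cast_ne (L := L) hL 3 (by norm_num) (by norm_num); simpa using this

lemma W_swap {L : ℕ} [NeZero L] (hL : 4 ≤ L) (x y : ℝ) (k : ZMod L) (η : ZMod L → Bool)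
    (h1 : η k = true) (h2 : η (k+1) = false) :
    (∏ j : ZMod L, FK x y η j) * (if η (k+2) then y else 1)
      = (∏ j : ZMod L, FK x y (swapK k η) j) * (if η (k-1) then y else 1) := by
  have e1 := zone (L := L) hL
  have e2 := ztwo (L := L) hL
  have hd1 : k - 1 ≠ k := fun h => e1 (by linear_combination -h)
  have hd2 : k - 1 ≠ k + 1 := fun h => e2 (by linear_combination -h)
  have hd3 : k ≠ k + 1 := fun h => e1 (by linear_combination -h)
  have hd3' : k + 1 ≠ k := fun h => e1 (by linear_combination h)
  have hd4 : k + 2 ≠ k := fun h => e2 (by linear_combination h)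
  have hd5 : k + 2 ≠ k + 1 := fun h => e1 (by linear_combination h)
  have hd6 : k - 1 + 1 = k := by ring
  have hadd : k + 1 + 1 = k + 2 := by ring
  have hs1 : swapK k η (k - 1) = η (k - 1) := by simp [swapK, hd1, hd2]
  have hs2 : swapK k η k = false := by simp [swapK, h2]
  have hs3 : swapK k η (k + 1) = true := by simp [swapK, hd3', h1]
  have hs4 : swapK k η (k + 2) = η (k + 2) := by simp [swapK, hd4, hd5]
  set S : Finset (ZMod L) := {k - 1, k, k + 1} with hS
  have hsplit : ∀ g : ZMod L → ℝ,
      (∏ j : ZMod L, g j) = g (k - 1) * (g k * g (k + 1)) * ∏ j ∈ Sᶜ, g j := by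
    intro g
    rw [← Finset.prod_mul_prod_compl S g]
    congr 1
    rw [hS, Finset.prod_insert (by simp [hd1, hd2]),
      Finset.prod_insert (by simp [hd3]), Finset.prod_singleton]
  have hco : (∏ j ∈ Sᶜ, FK x y (swapK k η) j) = ∏ j ∈ Sᶜ, FK x y η j := by
    refine Finset.prod_congr rfl fun j hj => ?_
    simp only [hS, Finset.mem_compl, Finset.mem_insert, Finset.mem_singleton, not_or] at hj
    obtain ⟨hj1, hj2, hj3⟩ := hj
    have hj4 : j + 1 ≠ k := fun h => hj1 (by linear_combination h)
    have hj5 : j + 1 ≠ k + 1 := fun h => hj2 (by linear_combination h)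
    simp only [FK, swapK, if_neg hj2, if_neg hj3, if_neg hj4, if_neg hj5]
  have key : FK x y η (k - 1) * (FK x y η k * FK x y η (k + 1)) * (if η (k+2) then y else 1)
      = FK x y (swapK k η) (k - 1) * (FK x y (swapK k η) k * FK x y (swapK k η) (k + 1)) *
        (if η (k-1) then y else 1) := by
    simp only [FK, hd6, hadd, hs1, hs2, hs3, hs4, h1, h2]
    cases ha : η (k - 1) <;> cases hb : η (k + 2) <;>
      simp only [Bool.and_true, Bool.and_false, Bool.true_and, Bool.false_and, Bool.and_self,
        reduceIte, if_true, if_false] <;> ring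
  rw [hsplit (FK x y η), hsplit (FK x y (swapK k η)), hco]
  linear_combination (∏ j ∈ Sᶜ, FK x y η j) * key

lemma FK_pos {L : ℕ} (x y : ℝ) (hx : 0 < x) (hy : 0 < y) (η : ZMod L → Bool) (j : ZMod L) :
    0 < FK x y η j := by
  unfold FK
  split_ifs <;> positivity

lemma db_iff {L : ℕ} [NeZero L] (hL : 4 ≤ L) (r ℓe κ lam ε x y : ℝ)
    (hx : 0 < x) (hy0 : 0 < y) (k : ZMod L) (η : ZMod L → Bool)
    (h1 : η k = true) (h2 : η (k+1) = false) :
    ((∏ j : ZMod L, FK x y η j) *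
        ((evB (η k) * (1 - evB (η (k+1))) *
            (r*(1+κ) + r*(ε-κ)*evB (η (k-1)) - r*(ε+κ)*evB (η (k+2))))
          + ((1 - evB (η k)) * evB (η (k+1)) *
            (ℓe*(1+lam) - ℓe*(ε+lam)*evB (η (k-1)) + ℓe*(ε-lam)*evB (η (k+2)))))
      = (∏ j : ZMod L, FK x y (swapK k η) j) *
        ((evB (swapK k η k) * (1 - evB (swapK k η (k+1))) *
            (r*(1+κ) + r*(ε-κ)*evB (swapK k η (k-1)) - r*(ε+κ)*evB (swapK k η (k+2))))
          + ((1 - evB (swapK k η k)) * evB (swapK k η (k+1)) *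
            (ℓe*(1+lam) - ℓe*(ε+lam)*evB (swapK k η (k-1)) + ℓe*(ε-lam)*evB (swapK k η (k+2))))))
    ↔ ((if η (k-1) then y else 1) *
          (r*(1+κ) + r*(ε-κ)*evB (η (k-1)) - r*(ε+κ)*evB (η (k+2)))
        = (if η (k+2) then y else 1) *
          (ℓe*(1+lam) - ℓe*(ε+lam)*evB (η (k-1)) + ℓe*(ε-lam)*evB (η (k+2)))) := by
  have e1 := zone (L := L) hL
  have e2 := ztwo (L := L) hL
  have hd1 : k - 1 ≠ k := fun h => e1 (by linear_combination -h)
  have hd2 : k - 1 ≠ k + 1 := fun h => e2 (by linear_combination -h)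
  have hd3' : k + 1 ≠ k := fun h => e1 (by linear_combination h)
  have hd4 : k + 2 ≠ k := fun h => e2 (by linear_combination h)
  have hd5 : k + 2 ≠ k + 1 := fun h => e1 (by linear_combination h)
  have hs1 : swapK k η (k - 1) = η (k - 1) := by simp [swapK, hd1, hd2]
  have hs2 : swapK k η k = false := by simp [swapK, h2]
  have hs3 : swapK k η (k + 1) = true := by simp [swapK, hd3', h1]
  have hs4 : swapK k η (k + 2) = η (k + 2) := by simp [swapK, hd4, hd5]
  have hw := W_swap (L := L) hL x y k η h1 h2
  have hWpos : 0 < ∏ j : ZMod L, FK x y η j :=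
    Finset.prod_pos fun j _ => FK_pos x y hx hy0 η j
  have hYa : (0:ℝ) < if η (k-1) then y else 1 := by split_ifs <;> norm_num [hy0]
  rw [h1, h2, hs1, hs2, hs3, hs4]
  simp only [evB, Bool.false_eq_true, if_true, if_false, reduceIte]
  constructor
  · intro h
    apply mul_left_cancel₀ (ne_of_gt hWpos)
    linear_combination (if η (k-1) then y else (1:ℝ)) * h
      - (ℓe*(1+lam) - ℓe*(ε+lam)*(if η (k-1) then (1:ℝ) else 0)
          + ℓe*(ε-lam)*(if η (k+2) then (1:ℝ) else 0)) * hw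
  · intro h
    apply mul_left_cancel₀ (ne_of_gt hYa)
    linear_combination (∏ j : ZMod L, FK x y η j) * h
      + (ℓe*(1+lam) - ℓe*(ε+lam)*(if η (k-1) then (1:ℝ) else 0)
          + ℓe*(ε-lam)*(if η (k+2) then (1:ℝ) else 0)) * hw

lemma swapK_swapK {L : ℕ} (k : ZMod L) (η : ZMod L → Bool) (hne : k + 1 ≠ k) :
    swapK k (swapK k η) = η := by
  funext j
  by_cases hj : j = k
  · simp [swapK, hj, hne]
  · by_cases hj' : j = k + 1
    · simp [swapK, hj, hj', hne]
    · simp [swapK, hj, hj', hne]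

/-- The generalized periodic KLS model is reversible w.r.t. the periodic Ising
measure if and only if r = ℓ and κ = λ. -/
theorem stmt_12 (L : ℕ) [NeZero L] (hL : 4 ≤ L) (r ℓe κ lam ε φ : ℝ)
    (hr : 0 < r) (hl : 0 < ℓe)
    (hκ : -1 < κ ∧ κ < 1) (hlam : -1 < lam ∧ lam < 1) (hε : -1 < ε ∧ ε < 1) :
    let x : ℝ := Real.exp (φ / 2)
    let y : ℝ := (1 - ε) / (1 + ε)
    let ev : Bool → ℝ := fun b => if b then 1 else 0
    let W : (ZMod L → Bool) → ℝ := fun η => ∏ k : ZMod L,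
      ((if η k then x else 1) * (if η (k+1) then x else 1) *
        (if η k && η (k+1) then y else 1))
    let swap : ZMod L → (ZMod L → Bool) → (ZMod L → Bool) := fun k η j =>
      if j = k then η (k+1) else if j = k+1 then η k else η j
    let rrate : ZMod L → (ZMod L → Bool) → ℝ := fun k η =>
      ev (η k) * (1 - ev (η (k+1))) *
        (r*(1+κ) + r*(ε-κ)*ev (η (k-1)) - r*(ε+κ)*ev (η (k+2)))
    let lrate : ZMod L → (ZMod L → Bool) → ℝ := fun k η =>
      (1 - ev (η k)) * ev (η (k+1)) *
        (ℓe*(1+lam) - ℓe*(ε+lam)*ev (η (k-1)) + ℓe*(ε-lam)*ev (η (k+2)))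
    -- detailed balance for every nearest-neighbour swap ↔ (r = ℓ ∧ κ = λ)
    ((∀ η : ZMod L → Bool, ∀ k : ZMod L,
        W η * (rrate k η + lrate k η)
          = W (swap k η) * (rrate k (swap k η) + lrate k (swap k η)))
      ↔ (r = ℓe ∧ κ = lam)) := by
  intro x y ev W swp rrate lrate
  have hx : 0 < x := Real.exp_pos _
  have h1ε : (0:ℝ) < 1 + ε := by linarith [hε.1]
  have h2ε : (0:ℝ) < 1 - ε := by linarith [hε.2]
  have hy0 : 0 < y := div_pos h2ε h1ε
  have hy : y * (1 + ε) = 1 - ε := div_mul_cancel₀ _ (ne_of_gt h1ε)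
  have e1 := zone (L := L) hL
  have e2 := ztwo (L := L) hL
  have e3 := zthree (L := L) hL
  have hd3' : (0:ZMod L) + 1 ≠ 0 := fun h => e1 (by linear_combination h)
  constructor
  · intro h
    set η1 : ZMod L → Bool := fun j => decide (j = 0) with hη1
    have k1 : η1 0 = true := by simp [hη1]
    have k2 : η1 (0+1) = false := by
      simp only [hη1, decide_eq_false_iff_not]
      exact fun hh => e1 (by linear_combination hh)
    have k3 : η1 (0-1) = false := by
      simp only [hη1, decide_eq_false_iff_not]
      exact fun hh => e1 (by linear_combination -hh)
    have k4 : η1 (0+2) = false := by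
      simp only [hη1, decide_eq_false_iff_not]
      exact fun hh => e2 (by linear_combination hh)
    have eq1 := (db_iff (L := L) hL r ℓe κ lam ε x y hx hy0 0 η1 k1 k2).mp (h η1 0)
    rw [k3, k4] at eq1
    simp only [evB, Bool.false_eq_true, if_false, if_true, reduceIte] at eq1
    set η2 : ZMod L → Bool := fun j => decide (j = 0) || decide (j = 0 - 1) with hη2
    have m1 : η2 0 = true := by simp [hη2]
    have m2 : η2 (0+1) = false := by
      simp only [hη2, Bool.or_eq_false_iff, decide_eq_false_iff_not]
      exact ⟨fun hh => e1 (by linear_combination hh), fun hh => e2 (by linear_combination hh)⟩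
    have m3 : η2 (0-1) = true := by simp [hη2]
    have m4 : η2 (0+2) = false := by
      simp only [hη2, Bool.or_eq_false_iff, decide_eq_false_iff_not]
      exact ⟨fun hh => e2 (by linear_combination hh), fun hh => e3 (by linear_combination hh)⟩
    have eq2 := (db_iff (L := L) hL r ℓe κ lam ε x y hx hy0 0 η2 m1 m2).mp (h η2 0)
    rw [m3, m4] at eq2
    simp only [evB, Bool.false_eq_true, if_false, if_true, reduceIte] at eq2
    have hre : r = ℓe := by
      have h3 : r * (1 - ε) = ℓe * (1 - ε) := by linear_combination eq2 - r * hy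
      exact mul_right_cancel₀ (ne_of_gt h2ε) h3
    refine ⟨hre, mul_left_cancel₀ hr.ne' ?_⟩
    linear_combination eq1 - (1 + lam) * hre
  · rintro ⟨hre, hkl⟩
    have main : ∀ η : ZMod L → Bool, ∀ k : ZMod L, η k = true → η (k+1) = false →
        W η * (rrate k η + lrate k η)
          = W (swp k η) * (rrate k (swp k η) + lrate k (swp k η)) := by
      intro η k h1 h2
      apply (db_iff (L := L) hL r ℓe κ lam ε x y hx hy0 k η h1 h2).mpr
      cases ha : η (k-1) <;> cases hb : η (k+2) <;>
        simp only [evB, Bool.false_eq_true, if_false, if_true, reduceIte]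
      · linear_combination r * hkl + (1 + lam) * hre
      · linear_combination -r * hy + y * (1 + ε) * hre
      · linear_combination r * hy + (1 - ε) * hre
      · linear_combination y * (1 - lam) * hre - y * r * hkl
    intro η k
    have hne : k + 1 ≠ k := fun hh => e1 (by linear_combination hh)
    cases hk1 : η k <;> cases hk2 : η (k+1)
    · have hid : swp k η = η := by
        funext j
        simp only [swp]
        split_ifs with hj hj'
        · rw [hj, hk1, hk2]
        · rw [hj', hk1, hk2]
        · rfl
      rw [hid]
    · have h1' : swp k η k = true := by simp [swp, hk2]
      have h2' : swp k η (k+1) = false := by simp [swp, hne, hk1]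
      have h' := main (swp k η) k h1' h2'
      have hss : swp k (swp k η) = η := swapK_swapK k η hne
      rw [hss] at h'
      exact h'.symm
    · exact main η k hk1 hk2
    · have hid : swp k η = η := by
        funext j
        simp only [swp]
        split_ifs with hj hj'
        · rw [hj, hk1, hk2]
        · rw [hj', hk1, hk2]
        · rfl
      rw [hid]
end

section
/- For the open-chain Ising measure with boundary fields, the local density at site k is ρ_k(L) = ⟨s₋| T^{k-1} n T^{L-k} |s₊⟩ / ⟨s₋| T^{L-1} |s₊⟩, where n = diag(0,1), and in the limit L → ∞ with k = ⌊uL⌋ for fixed u ∈ (0,1), ρ_k(L) converges to ρ = (v⁽⁰⁾₁)², the bulk density of the periodic Ising measure. -/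
open Matrix Finset Filter Topology

section IsingAux

lemma ising_chain1 (T : Matrix (Fin 2) (Fin 2) ℝ) (w : Fin 2 → ℝ) :
    ∀ (n : ℕ) (v : Fin 2 → ℝ),
    ∑ η : Fin (n+1) → Fin 2,
      (v (η 0) * ∏ j : Fin n, T (η j.castSucc) (η j.succ)) * w (η (Fin.last n))
    = v ⬝ᵥ (T ^ n).mulVec w := by
  intro n
  induction n with
  | zero =>
    intro v
    rw [← Equiv.sum_comp (Equiv.funUnique (Fin 1) (Fin 2)).symm
      (fun η : Fin 1 → Fin 2 => (v (η 0) * ∏ j : Fin 0, T (η j.castSucc) (η j.succ)) * w (η (Fin.last 0)))]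
    simp [dotProduct, mulVec, Finset.mul_sum]
  | succ n ih =>
    intro v
    rw [← Equiv.sum_comp (Fin.consEquiv (fun _ : Fin (n+2) => Fin 2))
      (fun η : Fin (n+1+1) → Fin 2 =>
        (v (η 0) * ∏ j : Fin (n+1), T (η j.castSucc) (η j.succ)) * w (η (Fin.last (n+1))))]
    rw [Fintype.sum_prod_type]
    have step : ∀ (a : Fin 2) (ρ : Fin (n+1) → Fin 2),
        ((Fin.consEquiv (fun _ : Fin (n+2) => Fin 2)) (a, ρ)) 0 = a ∧
        (∏ j : Fin (n+1), T (((Fin.consEquiv (fun _ : Fin (n+2) => Fin 2)) (a, ρ)) j.castSucc)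
            (((Fin.consEquiv (fun _ : Fin (n+2) => Fin 2)) (a, ρ)) j.succ))
          = T a (ρ 0) * ∏ j : Fin n, T (ρ j.castSucc) (ρ j.succ) ∧
        ((Fin.consEquiv (fun _ : Fin (n+2) => Fin 2)) (a, ρ)) (Fin.last (n+1)) = ρ (Fin.last n) := by
      intro a ρ
      refine ⟨by simp [Fin.consEquiv], ?_, ?_⟩
      · rw [Fin.prod_univ_succ]
        simp [Fin.consEquiv, ← Fin.succ_castSucc]
      · simp [Fin.consEquiv, ← Fin.succ_last]
    calc ∑ a : Fin 2, ∑ ρ : Fin (n+1) → Fin 2,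
          ((fun η : Fin (n+1+1) → Fin 2 =>
            (v (η 0) * ∏ j : Fin (n+1), T (η j.castSucc) (η j.succ)) * w (η (Fin.last (n+1))))
            ((Fin.consEquiv (fun _ : Fin (n+2) => Fin 2)) (a, ρ)))
        = ∑ ρ : Fin (n+1) → Fin 2,
            ((vecMul v T) (ρ 0) * ∏ j : Fin n, T (ρ j.castSucc) (ρ j.succ)) * w (ρ (Fin.last n)) := by
          rw [Finset.sum_comm]
          apply Finset.sum_congr rfl
          intro ρ _
          have hv : (vecMul v T) (ρ 0) = ∑ a : Fin 2, v a * T a (ρ 0) := by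
            simp [vecMul, dotProduct]
          rw [hv, Finset.sum_mul, Finset.sum_mul]
          apply Finset.sum_congr rfl
          intro a _
          obtain ⟨h1, h2, h3⟩ := step a ρ
          simp only [h1, h2, h3]
          ring
      _ = v ⬝ᵥ (T ^ (n+1)).mulVec w := by
          rw [ih (vecMul v T), pow_succ']
          rw [← dotProduct_mulVec, mulVec_mulVec]

lemma ising_chain2 (T : Matrix (Fin 2) (Fin 2) ℝ) (w g : Fin 2 → ℝ) :
    ∀ (n m : ℕ) (hm : m ≤ n) (v : Fin 2 → ℝ),
    ∑ η : Fin (n+1) → Fin 2,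
      ((v (η 0) * ∏ j : Fin n, T (η j.castSucc) (η j.succ)) * w (η (Fin.last n)))
        * g (η ⟨m, Nat.lt_succ_of_le hm⟩)
    = v ⬝ᵥ ((T ^ m * Matrix.diagonal g * T ^ (n-m)).mulVec w) := by
  intro n
  induction n with
  | zero =>
    intro m hm v
    interval_cases m
    rw [← Equiv.sum_comp (Equiv.funUnique (Fin 1) (Fin 2)).symm
      (fun η : Fin 1 → Fin 2 =>
        ((v (η 0) * ∏ j : Fin 0, T (η j.castSucc) (η j.succ)) * w (η (Fin.last 0)))
          * g (η ⟨0, Nat.lt_succ_of_le (le_refl 0)⟩))]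
    simp [dotProduct, mulVec, diagonal, Finset.mul_sum, mul_comm, mul_assoc, mul_left_comm]
  | succ n ih =>
    intro m hm v
    match m with
    | 0 =>
      set v' : Fin 2 → ℝ := vecMul v (Matrix.diagonal g) with hv'
      have hva : ∀ a, v' a = v a * g a := fun a => Matrix.vecMul_diagonal v g a
      have h0 : ∀ η : Fin (n+1+1) → Fin 2,
          ((v (η 0) * ∏ j : Fin (n+1), T (η j.castSucc) (η j.succ)) * w (η (Fin.last (n+1))))
            * g (η ⟨0, Nat.lt_succ_of_le hm⟩)
          = ((v' (η 0) * ∏ j : Fin (n+1), T (η j.castSucc) (η j.succ))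
              * w (η (Fin.last (n+1)))) := by
        intro η
        have h : η ⟨0, Nat.lt_succ_of_le hm⟩ = η 0 := rfl
        rw [h, hva]; ring
      rw [Finset.sum_congr rfl (fun η _ => h0 η), ising_chain1, hv']
      rw [← dotProduct_mulVec, mulVec_mulVec]
      rw [pow_zero, Matrix.one_mul, Nat.sub_zero]
    | m' + 1 =>
      have hm' : m' ≤ n := Nat.succ_le_succ_iff.mp hm
      rw [← Equiv.sum_comp (Fin.consEquiv (fun _ : Fin (n+2) => Fin 2))
        (fun η : Fin (n+1+1) → Fin 2 =>
          ((v (η 0) * ∏ j : Fin (n+1), T (η j.castSucc) (η j.succ)) * w (η (Fin.last (n+1))))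
            * g (η ⟨m'+1, Nat.lt_succ_of_le hm⟩))]
      rw [Fintype.sum_prod_type]
      calc ∑ a : Fin 2, ∑ ρ : Fin (n+1) → Fin 2,
            ((fun η : Fin (n+1+1) → Fin 2 =>
              ((v (η 0) * ∏ j : Fin (n+1), T (η j.castSucc) (η j.succ)) * w (η (Fin.last (n+1))))
                * g (η ⟨m'+1, Nat.lt_succ_of_le hm⟩))
              ((Fin.consEquiv (fun _ : Fin (n+2) => Fin 2)) (a, ρ)))
          = ∑ ρ : Fin (n+1) → Fin 2,
              (((vecMul v T) (ρ 0) * ∏ j : Fin n, T (ρ j.castSucc) (ρ j.succ)) * w (ρ (Fin.last n)))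
                * g (ρ ⟨m', Nat.lt_succ_of_le hm'⟩) := by
            rw [Finset.sum_comm]
            apply Finset.sum_congr rfl
            intro ρ _
            have hv : (vecMul v T) (ρ 0) = ∑ a : Fin 2, v a * T a (ρ 0) := by
              simp [vecMul, dotProduct]
            rw [hv, Finset.sum_mul, Finset.sum_mul, Finset.sum_mul]
            apply Finset.sum_congr rfl
            intro a _
            have h1 : ((Fin.consEquiv (fun _ : Fin (n+2) => Fin 2)) (a, ρ)) 0 = a := rfl
            have h2 : (∏ j : Fin (n+1), T (((Fin.consEquiv (fun _ : Fin (n+2) => Fin 2)) (a, ρ)) j.castSucc)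
                (((Fin.consEquiv (fun _ : Fin (n+2) => Fin 2)) (a, ρ)) j.succ))
              = T a (ρ 0) * ∏ j : Fin n, T (ρ j.castSucc) (ρ j.succ) := by
              rw [Fin.prod_univ_succ]
              simp [Fin.consEquiv, ← Fin.succ_castSucc]
            have h3 : ((Fin.consEquiv (fun _ : Fin (n+2) => Fin 2)) (a, ρ)) (Fin.last (n+1)) = ρ (Fin.last n) := by
              simp [Fin.consEquiv, ← Fin.succ_last]
            have h4 : ((Fin.consEquiv (fun _ : Fin (n+2) => Fin 2)) (a, ρ)) ⟨m'+1, Nat.lt_succ_of_le hm⟩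
                = ρ ⟨m', Nat.lt_succ_of_le hm'⟩ := by
              exact @Fin.cons_succ (n+1) (fun _ => Fin 2) a ρ ⟨m', Nat.lt_succ_of_le hm'⟩
            simp only [h1, h2, h3, h4]
            ring
        _ = v ⬝ᵥ ((T ^ (m'+1) * Matrix.diagonal g * T ^ (n+1-(m'+1))).mulVec w) := by
            rw [ih m' hm' (vecMul v T)]
            rw [← dotProduct_mulVec, mulVec_mulVec]
            have hM : T ^ (m'+1) * Matrix.diagonal g * T ^ (n+1-(m'+1))
                = T * (T ^ m' * Matrix.diagonal g * T ^ (n-m')) := by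
              simp only [Nat.succ_sub_succ, pow_succ', Matrix.mul_assoc]
            rw [hM]

lemma ising_vmv_mul_vmv (a b c d : Fin 2 → ℝ) :
    vecMulVec a b * vecMulVec c d = (b ⬝ᵥ c) • vecMulVec a d := by
  ext i j
  simp [vecMulVec_apply, Matrix.mul_apply, dotProduct, Finset.sum_mul, Finset.mul_sum]
  ring

lemma ising_vmv_mul (a b : Fin 2 → ℝ) (B : Matrix (Fin 2) (Fin 2) ℝ) :
    vecMulVec a b * B = vecMulVec a (vecMul b B) := by
  ext i j
  simp [vecMulVec_apply, Matrix.mul_apply, vecMul, dotProduct, Finset.mul_sum]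
  ring_nf

lemma ising_dot_vmv (sm sp a b : Fin 2 → ℝ) :
    sm ⬝ᵥ (vecMulVec a b).mulVec sp = (sm ⬝ᵥ a) * (b ⬝ᵥ sp) := by
  simp [vecMulVec_apply, mulVec, dotProduct, Finset.mul_sum, Finset.sum_mul]
  ring

lemma ising_Tpow (x y l0 l1 : ℝ)
    (hprod : (l0-1)*(l1-1) = -x^2)
    (hchar0 : l0^2 = (1+x^2*y)*l0 - x^2*y + x^2)
    (hchar1 : l1^2 = (1+x^2*y)*l1 - x^2*y + x^2)
    (hc0 : x^2+(l0-1)^2 ≠ 0) (hc1 : x^2+(l1-1)^2 ≠ 0) :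
    ∀ m : ℕ, (!![1, x; x, x^2*y] : Matrix (Fin 2) (Fin 2) ℝ)^m
      = (l0^m * (x^2+(l0-1)^2)⁻¹) • vecMulVec ![x, l0-1] ![x, l0-1]
        + (l1^m * (x^2+(l1-1)^2)⁻¹) • vecMulVec ![x, l1-1] ![x, l1-1] := by
  have hPQ : ((x^2+(l0-1)^2)⁻¹ : ℝ) • vecMulVec ![x, l0-1] ![x, l0-1]
      + ((x^2+(l1-1)^2)⁻¹ : ℝ) • vecMulVec ![x, l1-1] ![x, l1-1] = 1 := by
    ext i j
    fin_cases i <;> fin_cases j <;>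
      simp [vecMulVec_apply, Matrix.one_apply] <;> field_simp
    · linear_combination (x^2 - (l0-1)*(l1-1)) * hprod
    · linear_combination (x*(l0-1) + x*(l1-1)) * hprod
    · linear_combination (x*(l0-1) + x*(l1-1)) * hprod
    · linear_combination ((l0-1)*(l1-1) - x^2) * hprod
  have hTP : (!![1, x; x, x^2*y] : Matrix (Fin 2) (Fin 2) ℝ) * vecMulVec ![x, l0-1] ![x, l0-1]
      = l0 • vecMulVec ![x, l0-1] ![x, l0-1] := by
    ext i j
    fin_cases i <;> fin_cases j <;>
      simp [vecMulVec_apply, Matrix.mul_apply, Fin.sum_univ_two]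
    · ring
    · ring
    · linear_combination (-x)*hchar0
    · linear_combination (1 - l0)*hchar0
  have hTQ : (!![1, x; x, x^2*y] : Matrix (Fin 2) (Fin 2) ℝ) * vecMulVec ![x, l1-1] ![x, l1-1]
      = l1 • vecMulVec ![x, l1-1] ![x, l1-1] := by
    ext i j
    fin_cases i <;> fin_cases j <;>
      simp [vecMulVec_apply, Matrix.mul_apply, Fin.sum_univ_two]
    · ring
    · ring
    · linear_combination (-x)*hchar1
    · linear_combination (1 - l1)*hchar1
  intro m
  induction m with
  | zero => simpa using hPQ.symm
  | succ m ih =>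
    rw [pow_succ', ih, Matrix.mul_add, Matrix.mul_smul, Matrix.mul_smul, hTP, hTQ]
    rw [smul_smul, smul_smul]
    congr 2 <;> ring

lemma ising_expand_dot (sm sp w0 w1 : Fin 2 → ℝ) (N : Matrix (Fin 2) (Fin 2) ℝ) (α β γ δ : ℝ) :
    sm ⬝ᵥ (((α • vecMulVec w0 w0 + β • vecMulVec w1 w1) * N
        * (γ • vecMulVec w0 w0 + δ • vecMulVec w1 w1)).mulVec sp)
    = α*γ*(sm ⬝ᵥ w0)*((vecMul w0 N) ⬝ᵥ w0)*(w0 ⬝ᵥ sp)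
      + α*δ*(sm ⬝ᵥ w0)*((vecMul w0 N) ⬝ᵥ w1)*(w1 ⬝ᵥ sp)
      + β*γ*(sm ⬝ᵥ w1)*((vecMul w1 N) ⬝ᵥ w0)*(w0 ⬝ᵥ sp)
      + β*δ*(sm ⬝ᵥ w1)*((vecMul w1 N) ⬝ᵥ w1)*(w1 ⬝ᵥ sp) := by
  simp [Matrix.mul_apply, mulVec, dotProduct, vecMulVec_apply, vecMul,
    Fin.sum_univ_two, Matrix.add_apply, Matrix.smul_apply]
  ring

lemma ising_expand_dot2 (sm sp w0 w1 : Fin 2 → ℝ) (α β : ℝ) :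
    sm ⬝ᵥ ((α • vecMulVec w0 w0 + β • vecMulVec w1 w1).mulVec sp)
    = α*(sm ⬝ᵥ w0)*(w0 ⬝ᵥ sp) + β*(sm ⬝ᵥ w1)*(w1 ⬝ᵥ sp) := by
  simp only [Matrix.add_mulVec, Matrix.smul_mulVec, dotProduct_add,
    dotProduct_smul, smul_eq_mul, ising_dot_vmv]
  ring

lemma ising_exponent (J φ φm φp : ℝ) (n : ℕ) (hn : 1 ≤ n) (e : ℕ → ℝ) :
    (φm - φ/2) * e 0
      + (∑ j ∈ Finset.range n, (-J * (e j * e (j+1)) + φ/2 * (e j + e (j+1))))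
      + (φp - φ/2) * e n
    = -J * (∑ j ∈ Finset.range n, e j * e (j+1)) + φ * (∑ j ∈ Finset.Ioo 0 n, e j)
      + φm * e 0 + φp * e n := by
  rw [Finset.sum_add_distrib]
  have hJ : ∑ j ∈ Finset.range n, (-J * (e j * e (j+1)))
      = -J * (∑ j ∈ Finset.range n, e j * e (j+1)) := by
    rw [Finset.mul_sum]
  have h2 : ∑ j ∈ Finset.range n, (φ/2 * (e j + e (j+1)))
      = φ/2 * ((e 0 + ∑ j ∈ Finset.Ioo 0 n, e j)
          + ((∑ j ∈ Finset.Ioo 0 n, e j) + e n)) := by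
    rw [← Finset.mul_sum]
    congr 1
    rw [Finset.sum_add_distrib]
    congr 1
    · rw [Finset.range_eq_Ico, Finset.sum_eq_sum_Ico_succ_bot (by omega : 0 < n),
        Finset.Ico_add_one_left_eq_Ioo]
    · have h1 : ∑ j ∈ Finset.range n, e (j+1) = ∑ j ∈ Finset.Ico 1 (n+1), e j := by
        rw [Finset.sum_Ico_eq_sum_range]
        simp only [Nat.add_sub_cancel]
        exact Finset.sum_congr rfl (fun j _ => by rw [Nat.add_comm])
      rw [h1, Finset.sum_Ico_succ_top (by omega : 1 ≤ n), show Finset.Ico 1 n = Finset.Ioo 0 n from Finset.Ico_add_one_left_eq_Ioo 0 n]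
  rw [hJ, h2]
  ring

end IsingAux

set_option maxHeartbeats 1600000

/-- Local density of the open-chain Ising measure with boundary fields:
ρ_k(L) = ⟨s₋|T^{k-1} n T^{L-k}|s₊⟩ / ⟨s₋|T^{L-1}|s₊⟩, and for fixed u ∈ (0,1)
the density at site ⌊uL⌋ converges, as L → ∞, to the bulk density ρ = (v⁽⁰⁾₁)². -/
theorem stmt_14 (J φ φm φp : ℝ) :
    let x : ℝ := Real.exp (φ / 2)
    let y : ℝ := Real.exp (-J)
    let T : Matrix (Fin 2) (Fin 2) ℝ := !![1, x; x, x^2*y]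
    let nMat : Matrix (Fin 2) (Fin 2) ℝ := !![0, 0; 0, 1]
    let sm : Fin 2 → ℝ := ![1, Real.exp (φm - φ/2)]
    let sp : Fin 2 → ℝ := ![1, Real.exp (φp - φ/2)]
    let num : ℕ → ℕ → ℝ := fun L k => sm ⬝ᵥ ((T ^ (k-1) * nMat * T ^ (L-k)).mulVec sp)
    let den : ℕ → ℝ := fun L => sm ⬝ᵥ ((T ^ (L-1)).mulVec sp)
    let l0 : ℝ := (1 + x^2*y + Real.sqrt ((1 - x^2*y)^2 + 4*x^2)) / 2
    let ρ : ℝ := (x / Real.sqrt ((l0 - x^2*y)^2 + x^2)) ^ 2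
    -- the local density of the open-chain Ising measure equals the matrix-element formula
    (∀ L : ℕ, 2 ≤ L → ∀ k : ℕ, 1 ≤ k → k ≤ L →
      (let ev : (Fin L → Bool) → ℕ → ℝ := fun η i =>
        if h : i < L then (if η ⟨i, h⟩ then 1 else 0) else 0
      let W : (Fin L → Bool) → ℝ := fun η => Real.exp
        (-J * (∑ j ∈ Finset.range (L-1), ev η j * ev η (j+1))
          + φ * (∑ j ∈ Finset.Ioo 0 (L-1), ev η j)
          + φm * ev η 0 + φp * ev η (L-1))
      (∑ η : Fin L → Bool, W η * ev η (k-1)) / (∑ η : Fin L → Bool, W η)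
          = num L k / den L)) ∧
    -- thermodynamic limit of the bulk density profile
    (∀ u : ℝ, 0 < u → u < 1 →
      Tendsto (fun L : ℕ => num L ⌊u * (L : ℝ)⌋₊ / den L) atTop (𝓝 ρ)) := by
  intro x y T nMat sm sp num den l0 ρ
  have hx : (0:ℝ) < x := Real.exp_pos _
  have hy : (0:ℝ) < y := Real.exp_pos _
  -- the second eigenvalue
  set D : ℝ := Real.sqrt ((1 - x^2*y)^2 + 4*x^2) with hDdef
  have hD2 : D^2 = (1 - x^2*y)^2 + 4*x^2 := Real.sq_sqrt (by positivity)
  have hDnn : 0 ≤ D := Real.sqrt_nonneg _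
  have hl0 : l0 = (1 + x^2*y + D) / 2 := rfl
  set l1 : ℝ := (1 + x^2*y - D) / 2 with hl1
  have hxy : (0:ℝ) < x^2*y := by positivity
  have hDpos : 0 < D := by nlinarith [hD2, hDnn, sq_nonneg (1 - x^2*y)]
  have hDgt : 1 - x^2*y < D := by nlinarith [hD2, hDnn, sq_nonneg (1 - x^2*y)]
  have hd0 : 0 < l0 - 1 := by rw [hl0]; linarith
  have hl0pos : (0:ℝ) < l0 := by linarith
  have habs : |l1| < l0 := by
    rw [abs_lt]; constructor <;> [skip; skip] <;> rw [hl0, hl1] <;> nlinarith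
  have hchar0 : l0^2 = (1+x^2*y)*l0 - x^2*y + x^2 := by
    rw [hl0]; linear_combination (1/4 : ℝ) * hD2
  have hchar1 : l1^2 = (1+x^2*y)*l1 - x^2*y + x^2 := by
    rw [hl1]; linear_combination (1/4 : ℝ) * hD2
  have hprod : (l0-1)*(l1-1) = -x^2 := by
    rw [hl0, hl1]; linear_combination (-(1:ℝ)/4) * hD2
  have hc0pos : (0:ℝ) < x^2+(l0-1)^2 := by positivity
  have hc1pos : (0:ℝ) < x^2+(l1-1)^2 := by positivity
  have hTm : ∀ m : ℕ, T^m
      = (l0^m * (x^2+(l0-1)^2)⁻¹) • vecMulVec ![x, l0-1] ![x, l0-1]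
        + (l1^m * (x^2+(l1-1)^2)⁻¹) • vecMulVec ![x, l1-1] ![x, l1-1] :=
    ising_Tpow x y l0 l1 hprod hchar0 hchar1 (ne_of_gt hc0pos) (ne_of_gt hc1pos)
  -- scalar abbreviations
  set c0 : ℝ := x^2+(l0-1)^2 with hc0def
  set c1 : ℝ := x^2+(l1-1)^2 with hc1def
  set A0 : ℝ := sm ⬝ᵥ ![x, l0-1] with hA0def
  set A1 : ℝ := sm ⬝ᵥ ![x, l1-1] with hA1def
  set B0 : ℝ := ![x, l0-1] ⬝ᵥ sp with hB0def
  set B1 : ℝ := ![x, l1-1] ⬝ᵥ sp with hB1def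
  have hA0pos : 0 < A0 := by
    rw [hA0def, show sm = ![1, Real.exp (φm - φ/2)] from rfl]
    have : (![1, Real.exp (φm - φ/2)] : Fin 2 → ℝ) ⬝ᵥ ![x, l0-1]
        = 1 * x + Real.exp (φm - φ/2) * (l0-1) := by
      simp [dotProduct, Fin.sum_univ_two]
    rw [this]
    have h := Real.exp_pos (φm - φ/2)
    have h2 : 0 < Real.exp (φm - φ/2) * (l0-1) := mul_pos h hd0
    linarith
  have hB0pos : 0 < B0 := by
    rw [hB0def, show sp = ![1, Real.exp (φp - φ/2)] from rfl]
    have : (![x, l0-1] : Fin 2 → ℝ) ⬝ᵥ ![1, Real.exp (φp - φ/2)]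
        = x * 1 + (l0-1) * Real.exp (φp - φ/2) := by
      simp [dotProduct, Fin.sum_univ_two]
    rw [this]
    have h := Real.exp_pos (φp - φ/2)
    have h2 : 0 < (l0-1) * Real.exp (φp - φ/2) := mul_pos hd0 h
    linarith
  -- the dot products with nMat inserted
  have hnd : ∀ d d' : ℝ, (vecMul ![x, d] nMat) ⬝ᵥ ![x, d'] = d * d' := by
    intro d d'
    show (vecMul ![x, d] !![0, 0; 0, 1]) ⬝ᵥ ![x, d'] = d * d'
    simp [vecMul, dotProduct, Fin.sum_univ_two]
  -- closed forms for num and den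
  have hnum : ∀ L k : ℕ, num L k
      = l0^(k-1) * l0^(L-k) * ((l0-1)*(l0-1)*c0⁻¹*c0⁻¹*A0*B0)
        + l0^(k-1) * l1^(L-k) * ((l0-1)*(l1-1)*c0⁻¹*c1⁻¹*A0*B1)
        + l1^(k-1) * l0^(L-k) * ((l1-1)*(l0-1)*c1⁻¹*c0⁻¹*A1*B0)
        + l1^(k-1) * l1^(L-k) * ((l1-1)*(l1-1)*c1⁻¹*c1⁻¹*A1*B1) := by
    intro L k
    show sm ⬝ᵥ ((T ^ (k-1) * nMat * T ^ (L-k)).mulVec sp) = _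
    rw [hTm (k-1), hTm (L-k), ising_expand_dot, hnd, hnd, hnd, hnd,
      hA0def, hA1def, hB0def, hB1def]
    ring
  have hden : ∀ L : ℕ, den L
      = l0^(L-1) * (c0⁻¹*A0*B0) + l1^(L-1) * (c1⁻¹*A1*B1) := by
    intro L
    show sm ⬝ᵥ ((T ^ (L-1)).mulVec sp) = _
    rw [hTm (L-1), ising_expand_dot2, hA0def, hA1def, hB0def, hB1def]
    ring
  -- the ratio r
  set r : ℝ := l1 / l0 with hrdef
  have hl0ne : l0 ≠ 0 := ne_of_gt hl0pos
  have hl1r : l1 = l0 * r := by rw [hrdef]; field_simp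
  have hrabs : |r| < 1 := by
    rw [hrdef, abs_div, abs_of_pos hl0pos, div_lt_one hl0pos]; exact habs
  -- ratio formula
  have hratio : ∀ L k : ℕ, 1 ≤ k → k ≤ L →
      num L k / den L
      = (((l0-1)*(l0-1)*c0⁻¹*c0⁻¹*A0*B0)
          + ((l0-1)*(l1-1)*c0⁻¹*c1⁻¹*A0*B1) * r^(L-k)
          + ((l1-1)*(l0-1)*c1⁻¹*c0⁻¹*A1*B0) * r^(k-1)
          + ((l1-1)*(l1-1)*c1⁻¹*c1⁻¹*A1*B1) * r^(L-1))
        / ((c0⁻¹*A0*B0) + (c1⁻¹*A1*B1) * r^(L-1)) := by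
    intro L k hk1 hkL
    have e1 : (L:ℕ) - 1 = (k-1) + (L-k) := by omega
    have hnumL : num L k = l0^(L-1) *
        (((l0-1)*(l0-1)*c0⁻¹*c0⁻¹*A0*B0)
          + ((l0-1)*(l1-1)*c0⁻¹*c1⁻¹*A0*B1) * r^(L-k)
          + ((l1-1)*(l0-1)*c1⁻¹*c0⁻¹*A1*B0) * r^(k-1)
          + ((l1-1)*(l1-1)*c1⁻¹*c1⁻¹*A1*B1) * r^(L-1)) := by
      rw [hnum L k, hl1r, e1, pow_add, pow_add, mul_pow, mul_pow]
      ring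
    have hdenL : den L = l0^(L-1) *
        ((c0⁻¹*A0*B0) + (c1⁻¹*A1*B1) * r^(L-1)) := by
      rw [hden L, hl1r, mul_pow]
      ring
    rw [hnumL, hdenL, mul_div_mul_left _ _ (pow_ne_zero _ hl0ne)]
  -- limit value identity
  have hkey : (l0-1)*(l0-x^2*y) = x^2 := by linear_combination hchar0
  have hrho : ρ = (l0-1)^2 / c0 := by
    have hs : (0:ℝ) < (l0 - x^2*y)^2 + x^2 := by positivity
    have hsq : Real.sqrt ((l0 - x^2*y)^2 + x^2) ^ 2 = (l0 - x^2*y)^2 + x^2 :=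
      Real.sq_sqrt (le_of_lt hs)
    have hc0pos' : (0:ℝ) < x^2+(l0-1)^2 := by positivity
    show (x / Real.sqrt ((l0 - x^2*y)^2 + x^2)) ^ 2 = (l0-1)^2 / c0
    rw [div_pow, hsq, hc0def, div_eq_div_iff (ne_of_gt hs) (ne_of_gt hc0pos')]
    linear_combination (-(x^2 + (l0-1)*(l0-x^2*y))) * hkey
  refine ⟨?_, ?_⟩
  · -- Part 1: transfer matrix identity
    intro L hL k hk1 hkL
    intro ev W
    obtain ⟨n, rfl⟩ : ∃ n, L = n + 1 := ⟨L - 1, by omega⟩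
    have hn : 1 ≤ n := by omega
    -- Bool-to-Fin 2 conversion
    have hWdef : ∀ η, W η = Real.exp
        (-J * (∑ j ∈ Finset.range n, ev η j * ev η (j+1))
          + φ * (∑ j ∈ Finset.Ioo 0 n, ev η j)
          + φm * ev η 0 + φp * ev η n) := fun _ => rfl
    have hevdef : ∀ η i, ev η i
        = if h : i < n+1 then (if η ⟨i, h⟩ then (1:ℝ) else 0) else 0 := fun _ _ => rfl
    set χ : Fin 2 → ℝ := fun a => if a = 1 then 1 else 0 with hχdef
    have hfin0 : finTwoEquiv (0 : Fin 2) = false := rfl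
    have hfin1 : finTwoEquiv (1 : Fin 2) = true := rfl
    have hEχ : ∀ (η' : Fin (n+1) → Fin 2) (i : ℕ) (h : i < n+1),
        ev (fun j => finTwoEquiv (η' j)) i = χ (η' ⟨i, h⟩) := by
      intro η' i h
      have e1 : ev (fun j => finTwoEquiv (η' j)) i
          = if h' : i < n+1 then (if finTwoEquiv (η' ⟨i, h'⟩) then (1:ℝ) else 0) else 0 := rfl
      rw [e1, dif_pos h]
      generalize η' ⟨i, h⟩ = a
      fin_cases a <;> simp [hfin0, hfin1, hχdef]
    -- single-site and bond factors as exponentials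
    have hfac : ∀ a b : Fin 2, T a b
        = Real.exp (-J * (χ a * χ b) + φ/2 * (χ a + χ b)) := by
      intro a b
      rw [show T = !![1, x; x, x^2*y] from rfl, show x = Real.exp (φ/2) from rfl,
        show y = Real.exp (-J) from rfl]
      fin_cases a <;> fin_cases b <;>
        simp [hχdef, pow_two, ← Real.exp_add, Real.exp_eq_exp] <;> ring
    have hsm : ∀ a : Fin 2, sm a = Real.exp ((φm - φ/2) * χ a) := by
      intro a
      rw [show sm = ![1, Real.exp (φm - φ/2)] from rfl]
      fin_cases a <;> simp [hχdef]
    have hsp : ∀ a : Fin 2, sp a = Real.exp ((φp - φ/2) * χ a) := by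
      intro a
      rw [show sp = ![1, Real.exp (φp - φ/2)] from rfl]
      fin_cases a <;> simp [hχdef]
    -- pointwise weight identity
    have hW : ∀ η' : Fin (n+1) → Fin 2,
        W (fun j => finTwoEquiv (η' j))
        = (sm (η' 0) * ∏ j : Fin n, T (η' j.castSucc) (η' j.succ)) * sp (η' (Fin.last n)) := by
      intro η'
      have hb0 : χ (η' 0) = ev (fun j => finTwoEquiv (η' j)) 0 :=
        (hEχ η' 0 (by omega)).symm
      have hbn : χ (η' (Fin.last n)) = ev (fun j => finTwoEquiv (η' j)) n :=
        (hEχ η' n (by omega)).symm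
      have hcs : ∀ j : Fin n, χ (η' j.castSucc) = ev (fun i => finTwoEquiv (η' i)) (j:ℕ) :=
        fun j => (hEχ η' (j:ℕ) (by omega)).symm
      have hsc : ∀ j : Fin n, χ (η' j.succ) = ev (fun i => finTwoEquiv (η' i)) ((j:ℕ)+1) :=
        fun j => (hEχ η' ((j:ℕ)+1) (by omega)).symm
      have hprodexp : (∏ j : Fin n, T (η' j.castSucc) (η' j.succ))
          = Real.exp (∑ j ∈ Finset.range n,
              (-J * (ev (fun i => finTwoEquiv (η' i)) j * ev (fun i => finTwoEquiv (η' i)) (j+1))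
                + φ/2 * (ev (fun i => finTwoEquiv (η' i)) j + ev (fun i => finTwoEquiv (η' i)) (j+1)))) := by
        have hterm : ∀ j : Fin n, T (η' j.castSucc) (η' j.succ)
            = Real.exp (-J * (ev (fun i => finTwoEquiv (η' i)) (j:ℕ) * ev (fun i => finTwoEquiv (η' i)) ((j:ℕ)+1))
                + φ/2 * (ev (fun i => finTwoEquiv (η' i)) (j:ℕ) + ev (fun i => finTwoEquiv (η' i)) ((j:ℕ)+1))) := by
          intro j
          rw [hfac, hcs j, hsc j]
        rw [Finset.prod_congr rfl (fun j _ => hterm j), ← Real.exp_sum]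
        congr 1
        exact Fin.sum_univ_eq_sum_range
          (fun j => -J * (ev (fun i => finTwoEquiv (η' i)) j * ev (fun i => finTwoEquiv (η' i)) (j+1))
            + φ/2 * (ev (fun i => finTwoEquiv (η' i)) j + ev (fun i => finTwoEquiv (η' i)) (j+1))) n
      rw [hWdef (fun j => finTwoEquiv (η' j)), hsm, hsp, hb0, hbn, hprodexp, ← Real.exp_add, ← Real.exp_add, Real.exp_eq_exp]
      exact (ising_exponent J φ φm φp n hn (fun i => ev (fun j => finTwoEquiv (η' j)) i)).symm
    -- assemble both sums
    have hdiag : Matrix.diagonal χ = nMat := by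
      ext i j
      rw [show nMat = !![0, 0; 0, 1] from rfl]
      fin_cases i <;> fin_cases j <;> simp [Matrix.diagonal, hχdef]
    have hsum_den : (∑ η : Fin (n+1) → Bool, W η)
        = sm ⬝ᵥ ((T ^ n).mulVec sp) := by
      rw [← ising_chain1 T sp n sm]
      rw [← Fintype.sum_equiv (Equiv.arrowCongr (Equiv.refl (Fin (n+1))) finTwoEquiv)
        (fun η' : Fin (n+1) → Fin 2 =>
          (sm (η' 0) * ∏ j : Fin n, T (η' j.castSucc) (η' j.succ)) * sp (η' (Fin.last n)))
        W (fun η' => (hW η').symm)]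
    have hmle : k - 1 ≤ n := by omega
    have hsum_num : (∑ η : Fin (n+1) → Bool, W η * ev η (k-1))
        = sm ⬝ᵥ ((T ^ (k-1) * nMat * T ^ (n-(k-1))).mulVec sp) := by
      rw [← hdiag, ← ising_chain2 T sp χ n (k-1) hmle sm]
      rw [← Fintype.sum_equiv (Equiv.arrowCongr (Equiv.refl (Fin (n+1))) finTwoEquiv)
        (fun η' : Fin (n+1) → Fin 2 =>
          ((sm (η' 0) * ∏ j : Fin n, T (η' j.castSucc) (η' j.succ)) * sp (η' (Fin.last n)))
            * χ (η' ⟨k-1, Nat.lt_succ_of_le hmle⟩))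
        (fun η => W η * ev η (k-1)) ?_]
      intro η'
      show ((sm (η' 0) * ∏ j : Fin n, T (η' j.castSucc) (η' j.succ)) * sp (η' (Fin.last n)))
            * χ (η' ⟨k-1, Nat.lt_succ_of_le hmle⟩)
          = W (fun j => finTwoEquiv (η' j)) * ev (fun j => finTwoEquiv (η' j)) (k-1)
      rw [hW η', hEχ η' (k-1) (Nat.lt_succ_of_le hmle)]
    rw [hsum_den, hsum_num]
    have hnk : n - (k-1) = n + 1 - k := by omega
    rw [hnk]
    rfl
  · -- Part 2: thermodynamic limit
    intro u hu0 hu1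
    have hfloor_le : ∀ L : ℕ, ⌊u * (L:ℝ)⌋₊ ≤ L := by
      intro L
      have h1 : u * (L:ℝ) ≤ (L:ℝ) := by
        nlinarith [Nat.cast_nonneg (α := ℝ) L]
      calc ⌊u * (L:ℝ)⌋₊ ≤ ⌊(L:ℝ)⌋₊ := Nat.floor_le_floor h1
        _ = L := Nat.floor_natCast L
    have htu : Tendsto (fun L : ℕ => u * (L:ℝ)) atTop atTop := by
      exact (tendsto_natCast_atTop_atTop (R := ℝ)).const_mul_atTop hu0
    have htfl : Tendsto (fun L : ℕ => ⌊u * (L:ℝ)⌋₊) atTop atTop :=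
      tendsto_nat_floor_atTop.comp htu
    have htk1 : Tendsto (fun L : ℕ => ⌊u * (L:ℝ)⌋₊ - 1) atTop atTop :=
      (tendsto_sub_atTop_nat 1).comp htfl
    have htL1 : Tendsto (fun L : ℕ => L - 1) atTop atTop := tendsto_sub_atTop_nat 1
    have htLk : Tendsto (fun L : ℕ => L - ⌊u * (L:ℝ)⌋₊) atTop atTop := by
      rw [tendsto_atTop]
      intro b
      have hev : ∀ᶠ L : ℕ in atTop, (b : ℝ) ≤ (1-u) * (L:ℝ) := by
        have : Tendsto (fun L : ℕ => (1-u) * (L:ℝ)) atTop atTop :=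
          (tendsto_natCast_atTop_atTop (R := ℝ)).const_mul_atTop (by linarith)
        exact this.eventually_ge_atTop b
      filter_upwards [hev] with L hL
      have hfl : (⌊u * (L:ℝ)⌋₊ : ℝ) ≤ u * (L:ℝ) :=
        Nat.floor_le (by positivity)
      have : (b:ℝ) + (⌊u * (L:ℝ)⌋₊ : ℝ) ≤ (L:ℝ) := by nlinarith
      have hble : b + ⌊u * (L:ℝ)⌋₊ ≤ L := by exact_mod_cast this
      omega
    have hpow : Tendsto (fun m : ℕ => r ^ m) atTop (𝓝 0) :=
      tendsto_pow_atTop_nhds_zero_of_abs_lt_one hrabs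
    have ht1 : Tendsto (fun L : ℕ => r ^ (L - ⌊u * (L:ℝ)⌋₊)) atTop (𝓝 0) := hpow.comp htLk
    have ht2 : Tendsto (fun L : ℕ => r ^ (⌊u * (L:ℝ)⌋₊ - 1)) atTop (𝓝 0) := hpow.comp htk1
    have ht3 : Tendsto (fun L : ℕ => r ^ (L - 1)) atTop (𝓝 0) := hpow.comp htL1
    have hE0ne : (c0⁻¹*A0*B0) + (c1⁻¹*A1*B1) * (0:ℝ) ≠ 0 := by
      have : c0⁻¹*A0*B0 > 0 := by
        apply mul_pos (mul_pos (inv_pos.mpr hc0pos) hA0pos) hB0pos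
      simpa using ne_of_gt this
    have hmain : Tendsto (fun L : ℕ =>
        (((l0-1)*(l0-1)*c0⁻¹*c0⁻¹*A0*B0)
          + ((l0-1)*(l1-1)*c0⁻¹*c1⁻¹*A0*B1) * r^(L-⌊u * (L:ℝ)⌋₊)
          + ((l1-1)*(l0-1)*c1⁻¹*c0⁻¹*A1*B0) * r^(⌊u * (L:ℝ)⌋₊-1)
          + ((l1-1)*(l1-1)*c1⁻¹*c1⁻¹*A1*B1) * r^(L-1))
        / ((c0⁻¹*A0*B0) + (c1⁻¹*A1*B1) * r^(L-1))) atTop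
        (𝓝 ((((l0-1)*(l0-1)*c0⁻¹*c0⁻¹*A0*B0)
          + ((l0-1)*(l1-1)*c0⁻¹*c1⁻¹*A0*B1) * 0
          + ((l1-1)*(l0-1)*c1⁻¹*c0⁻¹*A1*B0) * 0
          + ((l1-1)*(l1-1)*c1⁻¹*c1⁻¹*A1*B1) * 0)
        / ((c0⁻¹*A0*B0) + (c1⁻¹*A1*B1) * 0))) := by
      apply Tendsto.div
      · exact ((((tendsto_const_nhds).add ((tendsto_const_nhds).mul ht1)).add
          ((tendsto_const_nhds).mul ht2)).add ((tendsto_const_nhds).mul ht3))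
      · exact (tendsto_const_nhds).add ((tendsto_const_nhds).mul ht3)
      · exact hE0ne
    have hval : (((l0-1)*(l0-1)*c0⁻¹*c0⁻¹*A0*B0)
          + ((l0-1)*(l1-1)*c0⁻¹*c1⁻¹*A0*B1) * 0
          + ((l1-1)*(l0-1)*c1⁻¹*c0⁻¹*A1*B0) * 0
          + ((l1-1)*(l1-1)*c1⁻¹*c1⁻¹*A1*B1) * 0)
        / ((c0⁻¹*A0*B0) + (c1⁻¹*A1*B1) * 0) = ρ := by
      rw [hrho]
      have hA0ne : A0 ≠ 0 := ne_of_gt hA0pos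
      have hB0ne : B0 ≠ 0 := ne_of_gt hB0pos
      have hc0ne : c0 ≠ 0 := ne_of_gt hc0pos
      field_simp
      ring
    rw [hval] at hmain
    apply hmain.congr'
    have hev1 : ∀ᶠ L : ℕ in atTop, 1 ≤ ⌊u * (L:ℝ)⌋₊ := htfl.eventually_ge_atTop 1
    filter_upwards [hev1] with L hL1
    exact (hratio L ⌊u * (L:ℝ)⌋₊ hL1 (hfloor_le L)).symm
end

section
/- For the generalized KLS model with periodic Ising invariant measure, the stationary current is j(L) = [c₀ + (c₂ - c₀)x²y·Y_{L-1}/Y_L − (c₁ + c₂x²y²)x²·Y_{L-2}/Y_L]·ρ_L, where c₀ = r(1+κ) - ℓ(1+λ), c₁ = r(ε+κ) - ℓ(ε+λ), c₂ = r(ε-κ) - ℓ(ε-λ), ρ_L = Y_L/Z_L, Y_n = (T^n)_{11}. -/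
open Matrix Finset

def bidx : Bool → Fin 2 := fun b => if b then 1 else 0

lemma sum_bidx (f : Fin 2 → ℝ) : ∑ b : Bool, f (bidx b) = ∑ i : Fin 2, f i := by
  rw [Fintype.sum_bool, Fin.sum_univ_two]
  simp [bidx, add_comm]

lemma sum_cons (n : ℕ) (f : (Fin (n+1) → Bool) → ℝ) :
    ∑ η : Fin (n+1) → Bool, f η = ∑ c : Bool, ∑ w : Fin n → Bool, f (Fin.cons c w) := by
  rw [← (Fin.consEquiv fun _ => Bool).sum_comp f, Fintype.sum_prod_type]
  rfl

lemma chain_key (M : Matrix (Fin 2) (Fin 2) ℝ) :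
    ∀ (n : ℕ) (g : Bool → Bool → ℝ),
    ∑ η : Fin (n+1) → Bool,
        (∏ i : Fin n, M (bidx (η i.castSucc)) (bidx (η i.succ))) * g (η 0) (η (Fin.last n))
      = ∑ a : Bool, ∑ b : Bool, g a b * (M ^ n) (bidx a) (bidx b) := by
  intro n
  induction n with
  | zero =>
    intro g
    rw [sum_cons]
    simp [Matrix.one_apply, bidx]
  | succ n ih =>
    intro g
    rw [sum_cons]
    have h1 : ∀ c : Bool,
        ∑ w : Fin (n+1) → Bool,
          (∏ i : Fin (n+1), M (bidx ((Fin.cons c w : Fin (n+2) → Bool) i.castSucc))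
              (bidx ((Fin.cons c w : Fin (n+2) → Bool) i.succ)))
            * g ((Fin.cons c w : Fin (n+2) → Bool) 0)
              ((Fin.cons c w : Fin (n+2) → Bool) (Fin.last (n+1)))
        = ∑ a : Bool, ∑ b : Bool,
            (M (bidx c) (bidx a) * g c b) * (M ^ n) (bidx a) (bidx b) := by
      intro c
      rw [← ih (fun u v => M (bidx c) (bidx u) * g c v)]
      apply Finset.sum_congr rfl
      intro w _
      rw [Fin.prod_univ_succ]
      have hlast : (Fin.cons c w : Fin (n+2) → Bool) (Fin.last (n+1)) = w (Fin.last n) := by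
        rw [← Fin.succ_last, Fin.cons_succ]
      rw [hlast]
      simp only [Fin.castSucc_zero, Fin.cons_zero, Fin.succ_zero_eq_one, Fin.cons_succ,
        ← Fin.succ_castSucc]
      ring_nf
      rw [show (1 : Fin (n+2)) = Fin.succ 0 from rfl, Fin.cons_succ]
      ring
    rw [Finset.sum_congr rfl (fun c _ => h1 c)]
    have h2 : ∀ a b : Bool, (M ^ (n+1)) (bidx a) (bidx b)
        = ∑ u : Bool, M (bidx a) (bidx u) * (M ^ n) (bidx u) (bidx b) := by
      intro a b
      rw [pow_succ', Matrix.mul_apply, ← sum_bidx (fun u => M (bidx a) u * (M ^ n) u (bidx b))]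
    simp only [Fintype.sum_bool, h2]
    ring

lemma fin1succ (n : ℕ) : (1 : Fin (n+2)) = Fin.succ 0 := rfl
lemma fin2succ (n : ℕ) : (2 : Fin (n+3)) = Fin.succ 1 := rfl
lemma fin3succ (n : ℕ) : (3 : Fin (n+4)) = Fin.succ 2 := rfl

lemma chain_key1 (M : Matrix (Fin 2) (Fin 2) ℝ) (n : ℕ) (g : Bool → Bool → Bool → ℝ) :
    ∑ η : Fin (n+2) → Bool,
        (∏ i : Fin (n+1), M (bidx (η i.castSucc)) (bidx (η i.succ))) * g (η 0) (η 1) (η (Fin.last (n+1)))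
      = ∑ a : Bool, ∑ b : Bool, ∑ c : Bool,
          g a b c * (M (bidx a) (bidx b) * (M ^ n) (bidx b) (bidx c)) := by
  rw [sum_cons]
  have h1 : ∀ cc : Bool,
      ∑ w : Fin (n+1) → Bool,
        (∏ i : Fin (n+1), M (bidx ((Fin.cons cc w : Fin (n+2) → Bool) i.castSucc))
            (bidx ((Fin.cons cc w : Fin (n+2) → Bool) i.succ)))
          * g ((Fin.cons cc w : Fin (n+2) → Bool) 0) ((Fin.cons cc w : Fin (n+2) → Bool) 1)
              ((Fin.cons cc w : Fin (n+2) → Bool) (Fin.last (n+1)))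
      = ∑ b : Bool, ∑ c : Bool,
          (M (bidx cc) (bidx b) * g cc b c) * (M ^ n) (bidx b) (bidx c) := by
    intro cc
    rw [← chain_key M n (fun u v => M (bidx cc) (bidx u) * g cc u v)]
    apply Finset.sum_congr rfl
    intro w _
    rw [Fin.prod_univ_succ]
    have hlast : (Fin.cons cc w : Fin (n+2) → Bool) (Fin.last (n+1)) = w (Fin.last n) := by
      rw [← Fin.succ_last, Fin.cons_succ]
    rw [hlast]
    simp only [Fin.castSucc_zero, Fin.cons_zero, fin1succ, Fin.cons_succ,
      ← Fin.succ_castSucc]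
    ring
  rw [Finset.sum_congr rfl (fun c _ => h1 c)]
  simp only [Fintype.sum_bool]
  ring

lemma chain_key2 (M : Matrix (Fin 2) (Fin 2) ℝ) (n : ℕ) (g : Bool → Bool → Bool → Bool → ℝ) :
    ∑ η : Fin (n+3) → Bool,
        (∏ i : Fin (n+2), M (bidx (η i.castSucc)) (bidx (η i.succ)))
          * g (η 0) (η 1) (η 2) (η (Fin.last (n+2)))
      = ∑ a : Bool, ∑ b : Bool, ∑ c : Bool, ∑ d : Bool,
          g a b c d * (M (bidx a) (bidx b) * (M (bidx b) (bidx c) * (M ^ n) (bidx c) (bidx d))) := by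
  rw [sum_cons]
  have h1 : ∀ cc : Bool,
      ∑ w : Fin (n+2) → Bool,
        (∏ i : Fin (n+2), M (bidx ((Fin.cons cc w : Fin (n+3) → Bool) i.castSucc))
            (bidx ((Fin.cons cc w : Fin (n+3) → Bool) i.succ)))
          * g ((Fin.cons cc w : Fin (n+3) → Bool) 0) ((Fin.cons cc w : Fin (n+3) → Bool) 1)
              ((Fin.cons cc w : Fin (n+3) → Bool) 2)
              ((Fin.cons cc w : Fin (n+3) → Bool) (Fin.last (n+2)))
      = ∑ b : Bool, ∑ c : Bool, ∑ d : Bool,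
          (M (bidx cc) (bidx b) * g cc b c d) * (M (bidx b) (bidx c) * (M ^ n) (bidx c) (bidx d)) := by
    intro cc
    rw [← chain_key1 M n (fun u v z => M (bidx cc) (bidx u) * g cc u v z)]
    apply Finset.sum_congr rfl
    intro w _
    rw [Fin.prod_univ_succ]
    have hlast : (Fin.cons cc w : Fin (n+3) → Bool) (Fin.last (n+2)) = w (Fin.last (n+1)) := by
      rw [← Fin.succ_last, Fin.cons_succ]
    rw [hlast]
    simp only [Fin.castSucc_zero, Fin.cons_zero, fin1succ, fin2succ, Fin.cons_succ,
      ← Fin.succ_castSucc]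
    ring
  rw [Finset.sum_congr rfl (fun c _ => h1 c)]
  simp only [Fintype.sum_bool]
  ring

lemma chain_key3 (M : Matrix (Fin 2) (Fin 2) ℝ) (n : ℕ) (g : Bool → Bool → Bool → Bool → Bool → ℝ) :
    ∑ η : Fin (n+4) → Bool,
        (∏ i : Fin (n+3), M (bidx (η i.castSucc)) (bidx (η i.succ)))
          * g (η 0) (η 1) (η 2) (η 3) (η (Fin.last (n+3)))
      = ∑ a : Bool, ∑ b : Bool, ∑ c : Bool, ∑ d : Bool, ∑ e : Bool,
          g a b c d e * (M (bidx a) (bidx b) * (M (bidx b) (bidx c)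
            * (M (bidx c) (bidx d) * (M ^ n) (bidx d) (bidx e)))) := by
  rw [sum_cons]
  have h1 : ∀ cc : Bool,
      ∑ w : Fin (n+3) → Bool,
        (∏ i : Fin (n+3), M (bidx ((Fin.cons cc w : Fin (n+4) → Bool) i.castSucc))
            (bidx ((Fin.cons cc w : Fin (n+4) → Bool) i.succ)))
          * g ((Fin.cons cc w : Fin (n+4) → Bool) 0) ((Fin.cons cc w : Fin (n+4) → Bool) 1)
              ((Fin.cons cc w : Fin (n+4) → Bool) 2) ((Fin.cons cc w : Fin (n+4) → Bool) 3)
              ((Fin.cons cc w : Fin (n+4) → Bool) (Fin.last (n+3)))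
      = ∑ b : Bool, ∑ c : Bool, ∑ d : Bool, ∑ e : Bool,
          (M (bidx cc) (bidx b) * g cc b c d e)
            * (M (bidx b) (bidx c) * (M (bidx c) (bidx d) * (M ^ n) (bidx d) (bidx e))) := by
    intro cc
    rw [← chain_key2 M n (fun u v z e => M (bidx cc) (bidx u) * g cc u v z e)]
    apply Finset.sum_congr rfl
    intro w _
    rw [Fin.prod_univ_succ]
    have hlast : (Fin.cons cc w : Fin (n+4) → Bool) (Fin.last (n+3)) = w (Fin.last (n+2)) := by
      rw [← Fin.succ_last, Fin.cons_succ]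
    rw [hlast]
    simp only [Fin.castSucc_zero, Fin.cons_zero, fin1succ, fin2succ, fin3succ, Fin.cons_succ,
      ← Fin.succ_castSucc]
    ring
  rw [Finset.sum_congr rfl (fun c _ => h1 c)]
  simp only [Fintype.sum_bool]
  ring

lemma cycleFin (M : Matrix (Fin 2) (Fin 2) ℝ) (m : ℕ) (h : Bool → Bool → Bool → Bool → ℝ) :
    ∑ η : Fin (m+4) → Bool,
        (∏ j : Fin (m+4), M (bidx (η j)) (bidx (η (j+1)))) * h (η 0) (η 1) (η 2) (η 3)
      = ∑ a : Bool, ∑ b : Bool, ∑ c : Bool, ∑ d : Bool,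
          h a b c d * (M (bidx a) (bidx b) * (M (bidx b) (bidx c)
            * (M (bidx c) (bidx d) * (M ^ (m+1)) (bidx d) (bidx a)))) := by
  have hcs : ∀ i : Fin (m+3), (i.castSucc + 1 : Fin (m+4)) = i.succ := by
    intro i
    apply Fin.ext
    simp [Fin.add_def]
    have := i.isLt; omega
  have hwrap : (Fin.last (m+3) + 1 : Fin (m+4)) = 0 := by
    apply Fin.ext
    simp [Fin.add_def]
  have hprod : ∀ η : Fin (m+4) → Bool,
      (∏ j : Fin (m+4), M (bidx (η j)) (bidx (η (j+1))))
        = (∏ i : Fin (m+3), M (bidx (η i.castSucc)) (bidx (η i.succ)))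
            * M (bidx (η (Fin.last (m+3)))) (bidx (η 0)) := by
    intro η
    rw [Fin.prod_univ_castSucc]
    congr 1
    · exact Finset.prod_congr rfl (fun i _ => by rw [hcs i])
    · rw [hwrap]
  calc ∑ η : Fin (m+4) → Bool,
        (∏ j : Fin (m+4), M (bidx (η j)) (bidx (η (j+1)))) * h (η 0) (η 1) (η 2) (η 3)
      = ∑ η : Fin (m+4) → Bool,
          (∏ i : Fin (m+3), M (bidx (η i.castSucc)) (bidx (η i.succ)))
            * (h (η 0) (η 1) (η 2) (η 3) * M (bidx (η (Fin.last (m+3)))) (bidx (η 0))) := by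
        exact Finset.sum_congr rfl (fun η _ => by rw [hprod η]; ring)
    _ = ∑ a : Bool, ∑ b : Bool, ∑ c : Bool, ∑ d : Bool, ∑ e : Bool,
          (h a b c d * M (bidx e) (bidx a)) * (M (bidx a) (bidx b) * (M (bidx b) (bidx c)
            * (M (bidx c) (bidx d) * (M ^ m) (bidx d) (bidx e)))) := by
        exact chain_key3 M m (fun a b c d e => h a b c d * M (bidx e) (bidx a))
    _ = _ := by
        have h2 : ∀ d a : Bool, (M ^ (m+1)) (bidx d) (bidx a)
            = ∑ e : Bool, (M ^ m) (bidx d) (bidx e) * M (bidx e) (bidx a) := by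
          intro d a
          rw [pow_succ, Matrix.mul_apply,
            ← sum_bidx (fun u => (M ^ m) (bidx d) u * M u (bidx a))]
        simp only [Fintype.sum_bool, h2]
        ring

lemma cycleZ (M : Matrix (Fin 2) (Fin 2) ℝ) (m : ℕ) (h : Bool → Bool → Bool → Bool → ℝ) :
    ∑ η : ZMod (m+4) → Bool,
        (∏ j : ZMod (m+4), M (bidx (η j)) (bidx (η (j+1)))) * h (η 0) (η 1) (η 2) (η 3)
      = ∑ a : Bool, ∑ b : Bool, ∑ c : Bool, ∑ d : Bool,
          h a b c d * (M (bidx a) (bidx b) * (M (bidx b) (bidx c)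
            * (M (bidx c) (bidx d) * (M ^ (m+1)) (bidx d) (bidx a)))) :=
  cycleFin M m h

lemma translateKLS (L : ℕ) [NeZero L] (A : Bool → Bool → ℝ) (G4 : Bool → Bool → Bool → Bool → ℝ)
    (k : ZMod L) :
    ∑ η : ZMod L → Bool, (∏ j : ZMod L, A (η j) (η (j+1))) * G4 (η (k-1)) (η k) (η (k+1)) (η (k+2))
      = ∑ η : ZMod L → Bool, (∏ j : ZMod L, A (η j) (η (j+1))) * G4 (η 0) (η 1) (η 2) (η 3) := by
  apply Fintype.sum_bijective (fun (η : ZMod L → Bool) => fun j => η (j + (k-1)))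
    ((Equiv.arrowCongr (Equiv.addRight (k-1)) (Equiv.refl Bool)).symm.bijective)
  intro η
  dsimp only
  have hp : (∏ j : ZMod L, A (η (j + (k-1))) (η (j + 1 + (k-1))))
      = ∏ j : ZMod L, A (η j) (η (j+1)) := by
    apply Fintype.prod_bijective (fun j : ZMod L => j + (k-1)) (Equiv.addRight (k-1)).bijective
    intro j
    rw [show j + 1 + (k-1) = j + (k-1) + 1 by ring]
  rw [show ((0 : ZMod L) + (k-1)) = k - 1 by ring, show ((1 : ZMod L) + (k-1)) = k by ring,
    show ((2 : ZMod L) + (k-1)) = k + 1 by ring, show ((3 : ZMod L) + (k-1)) = k + 2 by ring, hp]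

lemma bidx_true : bidx true = 1 := rfl
lemma bidx_false : bidx false = 0 := rfl

def Grate (r l κ lam ε : ℝ) (a b c d : Bool) : ℝ :=
  (if b then (1:ℝ) else 0) * (1 - if c then (1:ℝ) else 0) *
      (r*(1+κ) + r*(ε-κ)*(if a then (1:ℝ) else 0) - r*(ε+κ)*(if d then (1:ℝ) else 0))
    - (1 - if b then (1:ℝ) else 0) * (if c then (1:ℝ) else 0) *
      (l*(1+lam) - l*(ε+lam)*(if a then (1:ℝ) else 0) + l*(ε-lam)*(if d then (1:ℝ) else 0))

lemma scalarId (x y r l κ lam ε : ℝ) (m : ℕ) :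
    ∑ a : Bool, ∑ b : Bool, ∑ c : Bool, ∑ d : Bool,
        Grate r l κ lam ε a b c d *
          ((!![1, x; x, x^2*y] : Matrix (Fin 2) (Fin 2) ℝ) (bidx a) (bidx b) *
            ((!![1, x; x, x^2*y] : Matrix (Fin 2) (Fin 2) ℝ) (bidx b) (bidx c) *
              ((!![1, x; x, x^2*y] : Matrix (Fin 2) (Fin 2) ℝ) (bidx c) (bidx d) *
                ((!![1, x; x, x^2*y] : Matrix (Fin 2) (Fin 2) ℝ) ^ (m+1)) (bidx d) (bidx a))))
      = (r*(1+κ) - l*(1+lam)) * ((!![1, x; x, x^2*y] : Matrix (Fin 2) (Fin 2) ℝ) ^ (m+4)) 1 1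
        + ((r*(ε-κ) - l*(ε-lam)) - (r*(1+κ) - l*(1+lam)))*x^2*y
            * ((!![1, x; x, x^2*y] : Matrix (Fin 2) (Fin 2) ℝ) ^ (m+3)) 1 1
        - ((r*(ε+κ) - l*(ε+lam)) + (r*(ε-κ) - l*(ε-lam))*x^2*y^2)*x^2
            * ((!![1, x; x, x^2*y] : Matrix (Fin 2) (Fin 2) ℝ) ^ (m+2)) 1 1 := by
  set T : Matrix (Fin 2) (Fin 2) ℝ := !![1, x; x, x^2*y] with hTdef
  have hTt : Tᵀ = T := by
    ext i j
    fin_cases i <;> fin_cases j <;> simp [hTdef]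
  have hsym : (T^(m+1)) 0 1 = (T^(m+1)) 1 0 := by
    calc (T^(m+1)) 0 1 = ((T^(m+1))ᵀ) 1 0 := rfl
      _ = ((Tᵀ)^(m+1)) 1 0 := by rw [Matrix.transpose_pow]
      _ = (T^(m+1)) 1 0 := by rw [hTt]
  have h2 : T^(m+2) = T * T^(m+1) := pow_succ' T (m+1)
  have h3 : T^(m+3) = T * (T * T^(m+1)) := by rw [pow_succ' T (m+2), h2]
  have h4 : T^(m+4) = T * (T * (T * T^(m+1))) := by rw [pow_succ' T (m+3), h3]
  have hT00 : T 0 0 = (1:ℝ) := rfl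
  have hT01 : T 0 1 = x := rfl
  have hT10 : T 1 0 = x := rfl
  have hT11 : T 1 1 = x^2*y := rfl
  have hc : (T * T^(m+1)) 0 1 = (T^(m+1) * T) 0 1 := by
    rw [← pow_succ' T (m+1), pow_succ]
  simp only [Matrix.mul_apply, Fin.sum_univ_two, hT00, hT01, hT10, hT11] at hc
  rw [hsym] at hc
  rw [h2, h3, h4]
  simp only [Fintype.sum_bool, Grate, bidx_true, bidx_false, Matrix.mul_apply, Fin.sum_univ_two, reduceIte, Bool.false_eq_true, if_false]
  simp only [hT00, hT01, hT10, hT11]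
  rw [hsym]
  linear_combination (x*(l*(1+lam) - r*(1+κ))) * hc

lemma powEntryPos (M : Matrix (Fin 2) (Fin 2) ℝ) (hM : ∀ i j, 0 < M i j) :
    ∀ n, ∀ i j, 0 < (M ^ (n+1)) i j := by
  intro n
  induction n with
  | zero => intro i j; simpa using hM i j
  | succ n ih =>
    intro i j
    rw [pow_succ, Matrix.mul_apply, Fin.sum_univ_two]
    exact add_pos (mul_pos (ih i 0) (hM 0 j)) (mul_pos (ih i 1) (hM 1 j))

/-- Stationary current of the periodic generalized KLS model in the Ising measure:
j(L) = [c₀ + (c₂-c₀)x²y·Y_{L-1}/Y_L − (c₁+c₂x²y²)x²·Y_{L-2}/Y_L]·ρ_L. -/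
theorem stmt_15 (L : ℕ) [NeZero L] (hL : 4 ≤ L) (r ℓe κ lam ε φ : ℝ)
    (hr : 0 ≤ r) (hl : 0 ≤ ℓe)
    (hκ : -1 < κ ∧ κ < 1) (hlam : -1 < lam ∧ lam < 1) (hε : -1 < ε ∧ ε < 1) :
    let x : ℝ := Real.exp (φ / 2)
    let y : ℝ := (1 - ε) / (1 + ε)
    let T : Matrix (Fin 2) (Fin 2) ℝ := !![1, x; x, x^2*y]
    let Y : ℕ → ℝ := fun n => (T ^ n) 1 1
    let ev : Bool → ℝ := fun b => if b then 1 else 0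
    let W : (ZMod L → Bool) → ℝ := fun η => ∏ k : ZMod L,
      ((if η k then x else 1) * (if η (k+1) then x else 1) *
        (if η k && η (k+1) then y else 1))
    let Z : ℝ := ∑ η : ZMod L → Bool, W η
    let ρL : ℝ := Y L / Z
    let rrate : ZMod L → (ZMod L → Bool) → ℝ := fun k η =>
      ev (η k) * (1 - ev (η (k+1))) *
        (r*(1+κ) + r*(ε-κ)*ev (η (k-1)) - r*(ε+κ)*ev (η (k+2)))
    let lrate : ZMod L → (ZMod L → Bool) → ℝ := fun k η =>
      (1 - ev (η k)) * ev (η (k+1)) *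
        (ℓe*(1+lam) - ℓe*(ε+lam)*ev (η (k-1)) + ℓe*(ε-lam)*ev (η (k+2)))
    let c0 : ℝ := r*(1+κ) - ℓe*(1+lam)
    let c1 : ℝ := r*(ε+κ) - ℓe*(ε+lam)
    let c2 : ℝ := r*(ε-κ) - ℓe*(ε-lam)
    ∀ k : ZMod L,
      (∑ η : ZMod L → Bool, W η * (rrate k η - lrate k η)) / Z
        = (c0 + (c2 - c0)*x^2*y*(Y (L-1) / Y L)
            - (c1 + c2*x^2*y^2)*x^2*(Y (L-2) / Y L)) * ρL := by
  obtain ⟨m, rfl⟩ : ∃ m, L = m + 4 := ⟨L - 4, by omega⟩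
  intro x y T Y ev W Z ρL rrate lrate c0 c1 c2 k
  have hx : 0 < x := Real.exp_pos _
  have hy : 0 < y := div_pos (by linarith [hε.2]) (by linarith [hε.1])
  have hTpos : ∀ i j, 0 < T i j := by
    intro i j
    fin_cases i <;> fin_cases j
    exacts [one_pos, hx, hx, mul_pos (pow_pos hx 2) hy]
  have hYpos : 0 < Y (m+4) := powEntryPos T hTpos (m+3) 1 1
  have hZpos : 0 < Z := by
    show 0 < ∑ η : ZMod (m+4) → Bool, W η
    apply Finset.sum_pos
    · intro η _
      show 0 < ∏ j : ZMod (m+4),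
        ((if η j then x else 1) * (if η (j+1) then x else 1) * (if η j && η (j+1) then y else 1))
      apply Finset.prod_pos
      intro j _
      have h1 : 0 < (if η j then x else 1) := by split <;> [exact hx; exact one_pos]
      have h2 : 0 < (if η (j+1) then x else 1) := by split <;> [exact hx; exact one_pos]
      have h3 : 0 < (if η j && η (j+1) then y else 1) := by split <;> [exact hy; exact one_pos]
      exact mul_pos (mul_pos h1 h2) h3
    · exact Finset.univ_nonempty
  have hWT : ∀ η : ZMod (m+4) → Bool,
      W η = ∏ j : ZMod (m+4), T (bidx (η j)) (bidx (η (j+1))) := by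
    intro η
    show (∏ j : ZMod (m+4),
        ((if η j then x else 1) * (if η (j+1) then x else 1) * (if η j && η (j+1) then y else 1)))
      = ∏ j : ZMod (m+4), T (bidx (η j)) (bidx (η (j+1)))
    apply Finset.prod_congr rfl
    intro j _
    have hT00 : T 0 0 = (1:ℝ) := rfl
    have hT01 : T 0 1 = x := rfl
    have hT10 : T 1 0 = x := rfl
    have hT11 : T 1 1 = x^2*y := rfl
    cases hj : η j <;> cases hj2 : η (j+1) <;>
      simp only [bidx_true, bidx_false, hT00, hT01, hT10, hT11, Bool.false_and, Bool.true_and,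
        Bool.and_false, Bool.and_true, if_true, Bool.false_eq_true, if_false, reduceIte] <;>
      ring
  have hGr : ∀ η : ZMod (m+4) → Bool,
      rrate k η - lrate k η = Grate r ℓe κ lam ε (η (k-1)) (η k) (η (k+1)) (η (k+2)) :=
    fun η => rfl
  have hnum : (∑ η : ZMod (m+4) → Bool, W η * (rrate k η - lrate k η))
      = c0 * Y (m+4) + ((c2 - c0)*x^2*y) * Y (m+3) - ((c1 + c2*x^2*y^2)*x^2) * Y (m+2) := by
    calc ∑ η : ZMod (m+4) → Bool, W η * (rrate k η - lrate k η)
        = ∑ η : ZMod (m+4) → Bool, (∏ j : ZMod (m+4), T (bidx (η j)) (bidx (η (j+1))))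
            * Grate r ℓe κ lam ε (η (k-1)) (η k) (η (k+1)) (η (k+2)) :=
          Finset.sum_congr rfl (fun η _ => by rw [hWT η, hGr η])
      _ = ∑ η : ZMod (m+4) → Bool, (∏ j : ZMod (m+4), T (bidx (η j)) (bidx (η (j+1))))
            * Grate r ℓe κ lam ε (η 0) (η 1) (η 2) (η 3) :=
          translateKLS (m+4) (fun u v => T (bidx u) (bidx v)) (Grate r ℓe κ lam ε) k
      _ = ∑ a : Bool, ∑ b : Bool, ∑ c : Bool, ∑ d : Bool,
            Grate r ℓe κ lam ε a b c d * (T (bidx a) (bidx b) * (T (bidx b) (bidx c)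
              * (T (bidx c) (bidx d) * (T ^ (m+1)) (bidx d) (bidx a)))) :=
          cycleZ T m (Grate r ℓe κ lam ε)
      _ = c0 * Y (m+4) + ((c2 - c0)*x^2*y) * Y (m+3) - ((c1 + c2*x^2*y^2)*x^2) * Y (m+2) :=
          scalarId x y r ℓe κ lam ε m
  have e1 : m + 4 - 1 = m + 3 := by omega
  have e2 : m + 4 - 2 = m + 2 := by omega
  have hρ : ρL = Y (m+4) / Z := rfl
  rw [hnum, e1, e2, hρ]
  have hZ' : Z ≠ 0 := ne_of_gt hZpos
  have hY' : Y (m+4) ≠ 0 := ne_of_gt hYpos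
  field_simp
end

section
/- For the conventional KLS model (κ = λ), the stationary current in the periodic Ising measure can be written j = (r - ℓ) j⁺ with j⁺ = ⟨η_k(1-η_{k+1})[(1+κ)(1-η_{k-1}-η_{k+2}+η_{k-1}η_{k+2}) + (1+ε)η_{k-1}(1-η_{k+2}) + (1-ε)η_{k+2}(1-η_{k-1}) + (1-κ)η_{k-1}η_{k+2}]⟩ ≥ 0; hence sign(j) = sign(r-ℓ) for all densities (and j⁺ > 0 when the measure gives positive probability to some configuration with η_k=1, η_{k+1}=0). -/
open Finset

/-- For the conventional KLS model (κ = λ) the stationary current in the periodic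
Ising measure factorizes as j = (r-ℓ) j⁺ with j⁺ = ⟨r_k⟩/r ≥ 0; hence
sign(j) = sign(r-ℓ), and j⁺ > 0 whenever the measure gives positive weight to
some configuration with η_k = 1, η_{k+1} = 0. -/
theorem stmt_19 (L : ℕ) [NeZero L] (hL : 4 ≤ L) (r ℓe κ ε x : ℝ)
    (hr : 0 < r) (hl : 0 < ℓe) (hx : 0 < x)
    (hκ : -1 < κ ∧ κ < 1) (hε : -1 < ε ∧ ε < 1) :
    let y : ℝ := (1 - ε) / (1 + ε)
    let ev : Bool → ℝ := fun b => if b then 1 else 0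
    let W : (ZMod L → Bool) → ℝ := fun η => ∏ j : ZMod L,
      ((if η j then x else 1) * (if η (j+1) then x else 1) *
        (if η j && η (j+1) then y else 1))
    let Z : ℝ := ∑ η : ZMod L → Bool, W η
    let rrate : ZMod L → (ZMod L → Bool) → ℝ := fun k η =>
      r * ev (η k) * (1 - ev (η (k+1))) *
        ((1+κ) * ((1 - ev (η (k-1))) - ev (η (k+2)))
          + (1+ε) * ev (η (k-1)) + (1-ε) * ev (η (k+2)))
    let lrate : ZMod L → (ZMod L → Bool) → ℝ := fun k η =>
      ℓe * (1 - ev (η k)) * ev (η (k+1)) *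
        ((1+κ) * ((1 - ev (η (k-1))) - ev (η (k+2)))
          + (1-ε) * ev (η (k-1)) + (1+ε) * ev (η (k+2)))
    ∀ k : ZMod L,
      let j : ℝ := (∑ η : ZMod L → Bool, W η * (rrate k η - lrate k η)) / Z
      let jplus : ℝ := (∑ η : ZMod L → Bool, W η *
        (ev (η k) * (1 - ev (η (k+1))) *
          ((1+κ) * (1 - ev (η (k-1)) - ev (η (k+2)) + ev (η (k-1)) * ev (η (k+2)))
            + (1+ε) * ev (η (k-1)) * (1 - ev (η (k+2)))
            + (1-ε) * ev (η (k+2)) * (1 - ev (η (k-1)))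
            + (1-κ) * ev (η (k-1)) * ev (η (k+2))))) / Z
      j = (r - ℓe) * jplus ∧ 0 ≤ jplus ∧
        ((∃ η : ZMod L → Bool, 0 < W η ∧ η k = true ∧ η (k+1) = false) → 0 < jplus) := by
  intro y ev W Z rrate lrate k j jplus
  obtain ⟨hκ1, hκ2⟩ := hκ
  obtain ⟨hε1, hε2⟩ := hε
  have hy : (0:ℝ) < y := div_pos (by linarith) (by linarith)
  have hev : ∀ b, ev b = if b then 1 else 0 := fun _ => rfl
  have hWpos : ∀ η : ZMod L → Bool, 0 < W η := by
    intro η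
    refine Finset.prod_pos fun i _ => ?_
    have h1 : (0:ℝ) < if η i then x else 1 := by split <;> [exact hx; norm_num]
    have h2 : (0:ℝ) < if η (i+1) then x else 1 := by split <;> [exact hx; norm_num]
    have h3 : (0:ℝ) < if η i && η (i+1) then y else 1 := by split <;> [exact hy; norm_num]
    exact mul_pos (mul_pos h1 h2) h3
  have hZpos : 0 < Z :=
    Finset.sum_pos (fun η _ => hWpos η) ⟨fun _ => false, Finset.mem_univ _⟩
  set c : ZMod L := k + (k + 1) with hc
  have hinv : Function.Involutive (fun (η : ZMod L → Bool) (i : ZMod L) => η (c - i)) := by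
    intro η; funext i; simp
  set Te := hinv.toPerm with hTedef
  have hWT : ∀ η : ZMod L → Bool, W (Te η) = W η := by
    intro η
    show (∏ i : ZMod L, ((if η (c - i) then x else 1) * (if η (c - (i+1)) then x else 1) *
        (if η (c - i) && η (c - (i+1)) then y else 1))) = W η
    refine Fintype.prod_equiv (Equiv.subLeft (c - 1)) _ _ fun i => ?_
    have h1 : c - (i+1) = c - 1 - i := by ring
    have h2 : c - 1 - i + 1 = c - i := by ring
    simp only [Equiv.subLeft_apply, h1, h2]
    rw [Bool.and_comm]; ring
  let G : (ZMod L → Bool) → ℝ := fun η =>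
    ev (η k) * (1 - ev (η (k+1))) *
      ((1+κ) * (1 - ev (η (k-1)) - ev (η (k+2)) + ev (η (k-1)) * ev (η (k+2)))
        + (1+ε) * ev (η (k-1)) * (1 - ev (η (k+2)))
        + (1-ε) * ev (η (k+2)) * (1 - ev (η (k-1)))
        + (1-κ) * ev (η (k-1)) * ev (η (k+2)))
  have e1 : c - k = k + 1 := by rw [hc]; ring
  have e2 : c - (k+1) = k := by rw [hc]; ring
  have e3 : c - (k-1) = k + 2 := by rw [hc]; ring
  have e4 : c - (k+2) = k - 1 := by rw [hc]; ring
  have hrG : ∀ η : ZMod L → Bool, rrate k η = r * G η := by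
    intro η
    show r * ev (η k) * (1 - ev (η (k+1))) *
        ((1+κ) * ((1 - ev (η (k-1))) - ev (η (k+2)))
          + (1+ε) * ev (η (k-1)) + (1-ε) * ev (η (k+2)))
      = r * (ev (η k) * (1 - ev (η (k+1))) *
      ((1+κ) * (1 - ev (η (k-1)) - ev (η (k+2)) + ev (η (k-1)) * ev (η (k+2)))
        + (1+ε) * ev (η (k-1)) * (1 - ev (η (k+2)))
        + (1-ε) * ev (η (k+2)) * (1 - ev (η (k-1)))
        + (1-κ) * ev (η (k-1)) * ev (η (k+2))))
    ring
  have hlG : ∀ η : ZMod L → Bool, lrate k (Te η) = ℓe * G η := by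
    intro η
    show ℓe * (1 - ev (η (c - k))) * ev (η (c - (k+1))) *
        ((1+κ) * ((1 - ev (η (c - (k-1)))) - ev (η (c - (k+2))))
          + (1-ε) * ev (η (c - (k-1))) + (1+ε) * ev (η (c - (k+2))))
      = ℓe * (ev (η k) * (1 - ev (η (k+1))) *
      ((1+κ) * (1 - ev (η (k-1)) - ev (η (k+2)) + ev (η (k-1)) * ev (η (k+2)))
        + (1+ε) * ev (η (k-1)) * (1 - ev (η (k+2)))
        + (1-ε) * ev (η (k+2)) * (1 - ev (η (k-1)))
        + (1-κ) * ev (η (k-1)) * ev (η (k+2))))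
    rw [e1, e2, e3, e4]; ring
  have hGnn : ∀ η : ZMod L → Bool, 0 ≤ G η := by
    intro η
    show 0 ≤ ev (η k) * (1 - ev (η (k+1))) *
      ((1+κ) * (1 - ev (η (k-1)) - ev (η (k+2)) + ev (η (k-1)) * ev (η (k+2)))
        + (1+ε) * ev (η (k-1)) * (1 - ev (η (k+2)))
        + (1-ε) * ev (η (k+2)) * (1 - ev (η (k-1)))
        + (1-κ) * ev (η (k-1)) * ev (η (k+2)))
    cases h1 : η k <;> cases h2 : η (k+1) <;> cases h3 : η (k-1) <;> cases h4 : η (k+2) <;>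
      simp [hev, h1, h2, h3, h4] <;> linarith
  have hGpos : ∀ η : ZMod L → Bool, η k = true → η (k+1) = false → 0 < G η := by
    intro η h1 h2
    show 0 < ev (η k) * (1 - ev (η (k+1))) *
      ((1+κ) * (1 - ev (η (k-1)) - ev (η (k+2)) + ev (η (k-1)) * ev (η (k+2)))
        + (1+ε) * ev (η (k-1)) * (1 - ev (η (k+2)))
        + (1-ε) * ev (η (k+2)) * (1 - ev (η (k-1)))
        + (1-κ) * ev (η (k-1)) * ev (η (k+2)))
    cases h3 : η (k-1) <;> cases h4 : η (k+2) <;>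
      simp [hev, h1, h2, h3, h4] <;> linarith
  have hsum_r : ∑ η : ZMod L → Bool, W η * rrate k η
      = r * ∑ η : ZMod L → Bool, W η * G η := by
    rw [Finset.mul_sum]
    exact Finset.sum_congr rfl fun η _ => by rw [hrG]; ring
  have hsum_l : ∑ η : ZMod L → Bool, W η * lrate k η
      = ℓe * ∑ η : ZMod L → Bool, W η * G η := by
    rw [Finset.mul_sum]
    calc ∑ η : ZMod L → Bool, W η * lrate k η
        = ∑ η : ZMod L → Bool, W (Te η) * lrate k (Te η) :=
          (Equiv.sum_comp Te fun η => W η * lrate k η).symm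
      _ = ∑ η : ZMod L → Bool, ℓe * (W η * G η) := by
          refine Finset.sum_congr rfl fun η _ => ?_
          rw [hWT, hlG]; ring
  have hnum : ∑ η : ZMod L → Bool, W η * (rrate k η - lrate k η)
      = (r - ℓe) * ∑ η : ZMod L → Bool, W η * G η := by
    have : ∀ η : ZMod L → Bool, W η * (rrate k η - lrate k η)
        = W η * rrate k η - W η * lrate k η := fun η => by ring
    rw [Finset.sum_congr rfl fun η _ => this η, Finset.sum_sub_distrib, hsum_r, hsum_l]
    ring
  refine ⟨?_, ?_, ?_⟩
  · show (∑ η : ZMod L → Bool, W η * (rrate k η - lrate k η)) / Z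
      = (r - ℓe) * ((∑ η : ZMod L → Bool, W η * G η) / Z)
    rw [hnum, mul_div_assoc]
  · show 0 ≤ (∑ η : ZMod L → Bool, W η * G η) / Z
    exact div_nonneg (Finset.sum_nonneg fun η _ => mul_nonneg (hWpos η).le (hGnn η)) hZpos.le
  · rintro ⟨η₀, hW0, h1, h2⟩
    show 0 < (∑ η : ZMod L → Bool, W η * G η) / Z
    refine div_pos (Finset.sum_pos' (fun η _ => mul_nonneg (hWpos η).le (hGnn η))
      ⟨η₀, Finset.mem_univ _, mul_pos hW0 (hGpos η₀ h1 h2)⟩) hZpos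
end
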